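/- arXiv:1411.3047 — 5 statements merged into one kernel-verified Lean document; each statement's English description precedes it below -/
import Mathlib

section
/- For all positive integers Δ and g, every finite simple graph G with maximum degree Δ and girth at least g is isomorphic to a subgraph of some Δ-regular finite simple graph H with girth at least g. -/
/-!
Give each vertex `v` of `G` exactly `Δ - deg v` ports. Let `Γ` be the group of permutations of
the reduced words (no letter repeated consecutively) of length at most `g` over the ports, and
let `σ p` be the involution of this set toggling a leading letter `p`; a nonempty reduced word
of length at most `g` sends the empty word to the word itself, so it is not trivial in `Γ`.
On `V × Γ` take the copies `V × {γ}` of `G` together with the edges `(v, γ) — (v, γ * σ p)` for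
the ports `p` at `v`; this graph is `Δ`-regular. A cycle in it either stays in one copy of `G`,
or its crossings spell a nonempty reduced word which is trivial in `Γ`; either way its length is
at least `g`.
-/

section ReducedWords

variable {P : Type*} [DecidableEq P]

variable (P) in
def ReducedBall (N : ℕ) : Type _ := {w : List P // w.IsChain (· ≠ ·) ∧ w.length ≤ N}

instance [Finite P] (N : ℕ) : Finite (ReducedBall P N) :=
  have := (List.finite_length_le P N).to_subtype
  Finite.of_injective (fun w : ReducedBall P N => (⟨w.1, w.2.2⟩ : {l : List P | l.length ≤ N}))
    fun _ _ h => Subtype.ext (by simpa using congrArg Subtype.val h)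

namespace ReducedBall

def nil (N : ℕ) : ReducedBall P N := ⟨[], List.isChain_nil, Nat.zero_le N⟩

def toggle (N : ℕ) (p : P) (w : ReducedBall P N) : ReducedBall P N :=
  if hp : w.1.head? = some p then
    ⟨w.1.tail, w.2.1.tail, (List.tail_suffix _).length_le.trans w.2.2⟩
  else if hN : w.1.length < N then
    ⟨p :: w.1, List.isChain_cons.2 ⟨fun _ hq hpq => hp (hpq ▸ hq), w.2.1⟩, hN⟩
  else w

lemma toggle_of_head?_ne {N : ℕ} {p : P} {w : ReducedBall P N} (hp : w.1.head? ≠ some p)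
    (hN : w.1.length < N) : (toggle N p w).1 = p :: w.1 := by
  simp [toggle, hp, hN]

lemma toggle_involutive (N : ℕ) (p : P) : Function.Involutive (toggle N p) := by
  rintro ⟨w, hw, hwN⟩
  by_cases hp : w.head? = some p
  · obtain ⟨t, rfl⟩ : ∃ t, w = p :: t := by
      cases w <;> simp_all
    have ht : t.head? ≠ some p := fun h => (List.isChain_cons.1 hw).1 p h rfl
    apply Subtype.ext
    simp [toggle, ht, show t.length < N by simpa using hwN]
  · apply Subtype.ext
    by_cases hN : w.length < N <;> simp [toggle, hp, hN]

def togglePerm (N : ℕ) (p : P) : Equiv.Perm (ReducedBall P N) :=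
  Function.Involutive.toPerm _ (toggle_involutive N p)

lemma togglePerm_mul_self (N : ℕ) (p : P) : togglePerm N p * togglePerm N p = 1 :=
  Equiv.ext (toggle_involutive N p)

lemma prod_map_togglePerm_nil {N : ℕ} {u : List P} (hu : u.IsChain (· ≠ ·))
    (huN : u.length ≤ N) : ((u.map (togglePerm N)).prod (ReducedBall.nil N)).1 = u := by
  induction u with
  | nil => rfl
  | cons p t ih =>
    have ht := ih hu.tail (by simp at huN; omega)
    rw [List.map_cons, List.prod_cons, Equiv.Perm.mul_apply]
    generalize (t.map (togglePerm N)).prod (ReducedBall.nil N) = w at ht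
    subst ht
    exact toggle_of_head?_ne (fun h => (List.isChain_cons.1 hu).1 p h rfl) (by simpa using huN)

lemma prod_map_togglePerm_ne_one {N : ℕ} {u : List P} (hne : u ≠ []) (hu : u.IsChain (· ≠ ·))
    (huN : u.length ≤ N) : (u.map (togglePerm N)).prod ≠ 1 := fun h =>
  hne ((prod_map_togglePerm_nil hu huN).symm.trans (by rw [h]; rfl))

lemma togglePerm_ne_one {N : ℕ} (hN : 0 < N) (p : P) : togglePerm N p ≠ 1 := by
  simpa using prod_map_togglePerm_ne_one (List.cons_ne_nil p []) (List.isChain_singleton p) hN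

lemma togglePerm_injective {N : ℕ} (hN : 0 < N) : Function.Injective (togglePerm (P := P) N) :=
  fun p q h => by
    have hp := prod_map_togglePerm_nil (N := N) (List.isChain_singleton p) hN
    have hq := prod_map_togglePerm_nil (N := N) (List.isChain_singleton q) hN
    simp only [List.map_singleton, List.prod_singleton, h] at hp hq
    simpa using hp.symm.trans hq

end ReducedBall

end ReducedWords

namespace SimpleGraph

lemma coe_le_girth_iff {α : Type*} {G : SimpleGraph α} {n : ℕ} (hn : n ≠ 0) :
    (n : ℕ∞) ≤ G.girth ↔ (n : ℕ∞) ≤ G.egirth ∧ ¬G.IsAcyclic := by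
  by_cases hG : G.IsAcyclic
  · simp [hG, girth_eq_zero.2 hG, hn]
  · rw [girth, ENat.natCast_toNat (egirth_eq_top.not.2 hG)]
    simp [hG]

variable {V P Γ : Type*} [Group Γ]

def portGraph (G : SimpleGraph V) (loc : P → V) (σ : P → Γ) : SimpleGraph (V × Γ) :=
  fromRel fun x y => (x.2 = y.2 ∧ G.Adj x.1 y.1) ∨ ∃ p, loc p = x.1 ∧ y = (x.1, x.2 * σ p)

variable {G : SimpleGraph V} {loc : P → V} {σ : P → Γ}

lemma portGraph_adj_of_adj (γ : Γ) {u v : V} (h : G.Adj u v) :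
    (portGraph G loc σ).Adj (u, γ) (v, γ) :=
  (fromRel_adj _ _ _).2 ⟨fun e => h.ne (congrArg Prod.fst e), Or.inl (Or.inl ⟨rfl, h⟩)⟩

def portGraph.copyHom (γ : Γ) : G →g portGraph G loc σ :=
  ⟨fun v => (v, γ), portGraph_adj_of_adj γ⟩

lemma portGraph.copyHom_injective (γ : Γ) :
    Function.Injective (portGraph.copyHom (G := G) (loc := loc) (σ := σ) γ) :=
  fun _ _ h => congrArg Prod.fst h

lemma portGraph_adj_of_snd_eq {x y : V × Γ} (h : (portGraph G loc σ).Adj x y) (hxy : x.2 = y.2) :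
    G.Adj x.1 y.1 := by
  obtain ⟨hne, (⟨-, h⟩ | ⟨p, -, rfl⟩) | (⟨-, h⟩ | ⟨p, -, rfl⟩)⟩ := (fromRel_adj _ _ _).1 h
  · exact h
  · exact (hne (Prod.ext rfl hxy)).elim
  · exact h.symm
  · exact (hne (Prod.ext rfl hxy)).elim

lemma egirth_le_length_of_forall_snd_eq {x : V × Γ} {c : (portGraph G loc σ).Walk x x}
    (hc : c.IsCycle) (hcopy : ∀ z ∈ c.support, z.2 = x.2) : G.egirth ≤ c.length := by
  let s : Set (V × Γ) := {z | z.2 = x.2}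
  let f : (portGraph G loc σ).induce s →g G :=
    ⟨fun z => z.1.1, fun {z w} h => portGraph_adj_of_snd_eq h (z.2.trans w.2.symm)⟩
  have hf : Function.Injective f := fun z w e => Subtype.ext (Prod.ext e (z.2.trans w.2.symm))
  have hc' : (c.induce s hcopy).IsCycle := Walk.IsCycle.of_map (by rwa [Walk.map_induce])
  have hlen : ((c.induce s hcopy).map f).length = c.length := by
    rw [Walk.length_map, ← Walk.length_map (Embedding.induce s).toHom, Walk.map_induce]
    rfl
  exact hlen ▸ egirth_le_length (hc'.map hf)

open Classical in
noncomputable def portWord : ∀ {x y : V × Γ}, (portGraph G loc σ).Walk x y → List P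
  | _, _, .nil => []
  | x, _, .cons (v := z) _ c =>
    (if h : ∃ p, loc p = x.1 ∧ z = (x.1, x.2 * σ p) then [h.choose] else []) ++ portWord c

lemma portWord_length_le {x y : V × Γ} (c : (portGraph G loc σ).Walk x y) :
    (portWord c).length ≤ c.length := by
  induction c with
  | nil => simp [portWord]
  | cons h c ih =>
    simp only [portWord, List.length_append, Walk.length_cons]
    split_ifs <;> simp <;> omega

section involutive

variable (hσ : ∀ p, σ p * σ p = 1)
include hσ

lemma portGraph_adj {x y : V × Γ} :
    (portGraph G loc σ).Adj x y ↔
      (x.2 = y.2 ∧ G.Adj x.1 y.1) ∨ (x ≠ y ∧ ∃ p, loc p = x.1 ∧ y = (x.1, x.2 * σ p)) := by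
  rw [portGraph, fromRel_adj]
  constructor
  · rintro ⟨hne, (h | h) | (⟨e, h⟩ | ⟨p, hp, rfl⟩)⟩
    · exact Or.inl h
    · exact Or.inr ⟨hne, h⟩
    · exact Or.inl ⟨e.symm, h.symm⟩
    · exact Or.inr ⟨hne, p, hp, by simp [mul_assoc, hσ]⟩
  · rintro (h | ⟨hne, h⟩)
    · exact ⟨fun e => h.2.ne (congrArg Prod.fst e), Or.inl (Or.inl h)⟩
    · exact ⟨hne, Or.inl (Or.inr h)⟩

lemma snd_eq_of_adj_of_not_port {x y : V × Γ} (h : (portGraph G loc σ).Adj x y)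
    (hport : ¬∃ p, loc p = x.1 ∧ y = (x.1, x.2 * σ p)) : x.2 = y.2 :=
  (((portGraph_adj hσ).1 h).resolve_right fun h => hport h.2).1

lemma neighborSet_portGraph (hσ₁ : ∀ p, σ p ≠ 1) (x : V × Γ) :
    (portGraph G loc σ).neighborSet x =
      (·, x.2) '' G.neighborSet x.1 ∪ (fun p => (x.1, x.2 * σ p)) '' {p | loc p = x.1} := by
  ext y
  simp only [mem_neighborSet, portGraph_adj hσ, Set.mem_union, Set.mem_image]
  constructor
  · rintro (⟨h, hadj⟩ | ⟨-, p, hp, rfl⟩)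
    · exact Or.inl ⟨y.1, hadj, Prod.ext rfl h⟩
    · exact Or.inr ⟨p, hp, rfl⟩
  · rintro (⟨v, hadj, rfl⟩ | ⟨p, hp, rfl⟩)
    · exact Or.inl ⟨rfl, hadj⟩
    · exact Or.inr ⟨fun e => hσ₁ p (by simpa using congrArg Prod.snd e), p, hp, rfl⟩

lemma card_neighborSet_portGraph [Finite V] [Finite P] (hσ₁ : ∀ p, σ p ≠ 1)
    (hinj : Function.Injective σ) (x : V × Γ) :
    Nat.card ((portGraph G loc σ).neighborSet x) =
      Nat.card (G.neighborSet x.1) + Nat.card {p // loc p = x.1} := by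
  classical
  have hdisj : Disjoint ((·, x.2) '' G.neighborSet x.1)
      ((fun p => (x.1, x.2 * σ p)) '' {p | loc p = x.1}) := by
    refine Set.disjoint_left.2 ?_
    rintro _ ⟨v, hv, rfl⟩ ⟨p, -, e⟩
    exact (G.ne_of_adj hv) (congrArg Prod.fst e)
  rw [neighborSet_portGraph hσ hσ₁, Nat.card_congr (Equiv.Set.union hdisj), Nat.card_sum,
    Nat.card_image_of_injective (Prod.mk_left_injective x.2),
    Nat.card_image_of_injective fun p q e => hinj (by simpa using e)]
  rfl

lemma mul_prod_portWord {x y : V × Γ} (c : (portGraph G loc σ).Walk x y) :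
    x.2 * ((portWord c).map σ).prod = y.2 := by
  induction c with
  | nil => simp [portWord]
  | @cons x z y h c ih =>
    simp only [portWord]
    split_ifs with hport
    · obtain ⟨-, hz⟩ := hport.choose_spec
      generalize hport.choose = p at hz ⊢
      subst hz
      simpa [mul_assoc] using ih
    · simpa [snd_eq_of_adj_of_not_port hσ h hport] using ih

lemma snd_eq_of_portWord_eq_nil {x y : V × Γ} (c : (portGraph G loc σ).Walk x y)
    (hc : portWord c = []) : ∀ z ∈ c.support, z.2 = x.2 := by
  induction c with
  | nil => simp
  | @cons x z y h c ih =>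
    simp only [portWord, List.append_eq_nil_iff, dite_eq_right_iff, List.cons_ne_nil] at hc
    have hxz := snd_eq_of_adj_of_not_port hσ h fun hport => hc.1 hport
    rw [Walk.support_cons, List.forall_mem_cons]
    exact ⟨rfl, fun w hw => (ih hc.2 w hw).trans hxz.symm⟩

lemma edge_mem_of_portWord_eq_cons {x y : V × Γ} (c : (portGraph G loc σ).Walk x y) {p : P}
    {u : List P} (hc : portWord c = p :: u) : s((loc p, x.2), (loc p, x.2 * σ p)) ∈ c.edges := by
  induction c generalizing u with
  | nil => simp [portWord] at hc
  | @cons x z y h c ih =>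
    simp only [portWord] at hc
    rw [Walk.edges_cons]
    split_ifs at hc with hport
    · obtain ⟨hloc, hz⟩ := hport.choose_spec
      obtain rfl := (List.cons_eq_cons.1 hc).1
      rw [hloc, ← hz]
      exact List.mem_cons_self
    · rw [snd_eq_of_adj_of_not_port hσ h hport]
      exact List.mem_cons_of_mem _ (ih (by simpa using hc))

/-- Along a trail the port word is reduced: crossing the same port twice in a row, with only
copy edges in between, would mean crossing the same edge back. -/
lemma Walk.IsTrail.isChain_portWord {x y : V × Γ} {c : (portGraph G loc σ).Walk x y}
    (hc : c.IsTrail) : (portWord c).IsChain (· ≠ ·) := by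
  induction c with
  | nil => exact List.isChain_nil
  | @cons x z y h c ih =>
    rw [Walk.isTrail_cons] at hc
    have hw := ih hc.1
    simp only [portWord]
    split_ifs with hport
    · obtain ⟨hloc, hz⟩ := hport.choose_spec
      generalize hport.choose = p at hloc hz ⊢
      subst hz
      refine List.isChain_cons.2 ⟨fun q hq hpq => ?_, hw⟩
      subst hpq
      obtain ⟨u, hu⟩ := List.head?_eq_some_iff.1 hq
      have := edge_mem_of_portWord_eq_cons hσ c hu
      rw [hloc, mul_assoc, hσ, mul_one, Sym2.eq_swap] at this
      exact hc.2 this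
    · simpa using hw

theorem le_egirth_portGraph {g : ℕ} (hG : (g : ℕ∞) ≤ G.egirth)
    (hword : ∀ u : List P, u ≠ [] → u.IsChain (· ≠ ·) → u.length < g → (u.map σ).prod ≠ 1) :
    (g : ℕ∞) ≤ (portGraph G loc σ).egirth := by
  rw [le_egirth]
  intro x c hc
  by_contra! hlt
  have hshort : c.length < g := by exact_mod_cast hlt
  have hprod : ((portWord c).map σ).prod = 1 := mul_eq_left.1 (mul_prod_portWord hσ c)
  have hnil : portWord c = [] := by
    by_contra hne
    exact hword _ hne (hc.isChain_portWord hσ) (by have := portWord_length_le c; omega) hprod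
  exact (hG.trans (egirth_le_length_of_forall_snd_eq hc
    (snd_eq_of_portWord_eq_nil hσ c hnil))).not_gt hlt

end involutive

end SimpleGraph

open SimpleGraph

theorem statement3_general (Δ g : ℕ) (hg : 0 < g) :
    ∀ (V : Type) [Fintype V] [DecidableEq V] (G : SimpleGraph V) [DecidableRel G.Adj],
      G.maxDegree ≤ Δ → (g : ℕ∞) ≤ G.girth →
        ∃ (W : Type) (_ : Finite W) (H : SimpleGraph W) (f : V ↪ W),
          (∀ v : W, Nat.card (H.neighborSet v) = Δ) ∧
          (g : ℕ∞) ≤ H.girth ∧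
          (∀ u v : V, G.Adj u v → H.Adj (f u) (f v)) := by
  intro V _ _ G _ hmax hgirth
  obtain ⟨hGg, hGcyc⟩ := (coe_le_girth_iff hg.ne').1 hgirth
  let σ := ReducedBall.togglePerm (P := Σ v, Fin (Δ - G.degree v)) g
  have hσ : ∀ p, σ p * σ p = 1 := ReducedBall.togglePerm_mul_self g
  have hword : ∀ u : List _, u ≠ [] → u.IsChain (· ≠ ·) → u.length < g → (u.map σ).prod ≠ 1 :=
    fun u hne hu hug => ReducedBall.prod_map_togglePerm_ne_one hne hu hug.le
  let ι := portGraph.copyHom (G := G) (loc := Sigma.fst) (σ := σ) 1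
  refine ⟨_, inferInstance, portGraph G Sigma.fst σ, ⟨ι, portGraph.copyHom_injective 1⟩,
    fun x => ?_, ?_, fun u v => ι.map_adj⟩
  · rw [card_neighborSet_portGraph hσ (ReducedBall.togglePerm_ne_one hg)
        (ReducedBall.togglePerm_injective hg),
      Nat.card_congr (Equiv.sigmaSubtype x.1), Nat.card_eq_fintype_card,
      card_neighborSet_eq_degree, Nat.card_eq_fintype_card, Fintype.card_fin]
    have := (G.degree_le_maxDegree x.1).trans hmax
    omega
  · exact (coe_le_girth_iff hg.ne').2 ⟨le_egirth_portGraph hσ hGg hword,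
      fun hH => hGcyc (hH.comap ι (portGraph.copyHom_injective 1))⟩

/-- For all positive integers `Δ` and `g`, every finite simple graph `G` with maximum
degree `Δ` and girth at least `g` is isomorphic to a subgraph of some `Δ`-regular finite
simple graph `H` with girth at least `g`; i.e. there is an injective map `f : V ↪ W`
preserving adjacency. -/
theorem statement3 (Δ g : ℕ) (hΔ : 0 < Δ) (hg : 0 < g) :
    ∀ (V : Type) [Fintype V] [DecidableEq V] (G : SimpleGraph V) [DecidableRel G.Adj],
      G.maxDegree ≤ Δ → (g : ℕ∞) ≤ G.girth →
        ∃ (W : Type) (_ : Finite W) (H : SimpleGraph W) (f : V ↪ W),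
          (∀ v : W, Nat.card (H.neighborSet v) = Δ) ∧
          (g : ℕ∞) ≤ H.girth ∧
          (∀ u v : V, G.Adj u v → H.Adj (f u) (f v)) :=
  statement3_general Δ g hg
end

section
/- Let ε ∈ (0, 10⁻³]. There exists Δ₀ = Δ₀(ε) such that for every Δ ≥ Δ₀ and every Δ-regular finite simple graph G, there exists a collection {S_v : v ∈ V(G)} of subsets of the colour set {1, …, ⌊(1+ε)Δ⌋} satisfying: (A.1) for every vertex v, |S_v| ≤ 4εΔ/9; (A.2) for every edge e = uv, |S_u ∩ S_v| ≥ ε²Δ/18; and (A.3) for every vertex v and every colour c, the number of neighbours u of v with c ∈ S_u is at most εΔ/2. -/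
open SimpleGraph Finset

/-!
Take a prime `q` with `2.09 < εq ≤ 4.18 + 2ε` (Bertrand) and the `q² + q` points of the affine
plane over `𝔽_q` together with the directions of its non-vertical lines. Each of the `q²`
non-vertical lines has `q + 1` points, any two of them meet, and each point lies on at most `q`
of them. Give every point a private block of `⌈ε²Δ/18⌉` colours and let `S v` be the union of the
blocks on a line `f v`. Then (A.1), (A.2) and the size of the palette follow from the geometry
and the choice of `q`. For (A.3), a colour of the block of `p` is seen by the neighbours `u` of
`v` whose line passes through `p`; for uniformly random lines their expected number is
`Δ / q < εΔ / 2.09`, so an exponential-moment bound makes more than `εΔ / 2` of them unlikely,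
and the symmetric Lovász local lemma (in its counting form on the product space `V → lines`,
with `Δ² (q² + q)` dependencies per event) yields a good choice of `f`.
-/

section LocalLemma

variable {V α ι : Type*} [Fintype V] [DecidableEq V] [Fintype α] [DecidableEq α]

theorem card_inter_mul_card_eq_of_disjoint {A B : Finset (V → α)} {WA WB : Finset V}
    (hA : DependsOn (· ∈ A) ↑WA) (hB : DependsOn (· ∈ B) ↑WB) (hW : Disjoint WA WB) :
    #(A ∩ B) * Fintype.card (V → α) = #A * #B := by
  classical
  -- Swapping the coordinates outside `WA` is an involution carrying `(A ∩ B) × univ` onto `A × B`.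
  let swap : (V → α) × (V → α) → (V → α) × (V → α) :=
    fun p => ((WA : Set V).piecewise p.1 p.2, (WA : Set V).piecewise p.2 p.1)
  have hswap : ∀ p, swap (swap p) = p := fun p => by
    ext u <;> by_cases hu : u ∈ WA <;> simp [swap, Set.piecewise, hu]
  have agree_left : ∀ f g : V → α, ∀ u ∈ WA, f u = (WA : Set V).piecewise f g u :=
    fun f g u hu => (Set.piecewise_eq_of_mem _ _ _ hu).symm
  have agree_right : ∀ f g : V → α, ∀ u ∈ WB, g u = (WA : Set V).piecewise f g u :=
    fun f g u hu => (Set.piecewise_eq_of_notMem _ _ _ (disjoint_right.1 hW hu)).symm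
  rw [← card_univ, ← card_product, ← card_product]
  refine card_nbij' swap swap (fun p hp => ?_) (fun p hp => ?_) (fun p _ => hswap p)
    (fun p _ => hswap p)
  · simp only [coe_product, Set.mem_prod, coe_inter, Set.mem_inter_iff, mem_coe] at hp ⊢
    exact ⟨(hA (agree_left p.1 p.2)).mp hp.1.1, (hB (agree_right p.2 p.1)).mp hp.1.2⟩
  · simp only [coe_product, Set.mem_prod, coe_inter, Set.mem_inter_iff, mem_coe, coe_univ,
      Set.mem_univ, and_true] at hp ⊢
    exact ⟨(hA (agree_left p.1 p.2)).mp hp.1, (hB (agree_right p.1 p.2)).mp hp.2⟩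

variable [Fintype ι] [DecidableEq ι]

def avoiding (A : ι → Finset (V → α)) (S : Finset ι) : Finset (V → α) :=
  {f | ∀ j ∈ S, f ∉ A j}

variable {A : ι → Finset (V → α)}

@[simp]
lemma mem_avoiding {S : Finset ι} {f : V → α} : f ∈ avoiding A S ↔ ∀ j ∈ S, f ∉ A j := by
  simp [avoiding]

@[simp]
lemma avoiding_empty : avoiding A ∅ = univ := by
  ext; simp

lemma avoiding_insert (S : Finset ι) (j : ι) :
    avoiding A (insert j S) = avoiding A S \ A j := by
  ext; simp [and_comm]

lemma avoiding_anti {S S' : Finset ι} (h : S ⊆ S') : avoiding A S' ⊆ avoiding A S :=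
  fun _ hf => mem_avoiding.2 fun j hj => mem_avoiding.1 hf j (h hj)

lemma dependsOn_mem_avoiding {vbl : ι → Finset V} (hdep : ∀ i, DependsOn (· ∈ A i) ↑(vbl i))
    (S : Finset ι) : DependsOn (· ∈ avoiding A S) ↑(S.biUnion vbl) := by
  intro f g hfg
  simp only [mem_avoiding, eq_iff_iff]
  refine forall₂_congr fun j hj => not_congr (eq_iff_iff.mp (hdep j fun u hu => hfg u ?_))
  exact mem_coe.2 (mem_biUnion.2 ⟨j, hj, hu⟩)

lemma one_sub_mul_card_avoiding_le_card_avoiding_insert {x : ℝ} {S : Finset ι} {j : ι}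
    (h : (#(A j ∩ avoiding A S) : ℝ) ≤ x * #(avoiding A S)) :
    (1 - x) * #(avoiding A S) ≤ #(avoiding A (insert j S)) := by
  have hsplit := card_sdiff_add_card_inter (avoiding A S) (A j)
  rw [inter_comm] at hsplit
  have : (#(avoiding A S \ A j) : ℝ) + #(A j ∩ avoiding A S) = #(avoiding A S) := by
    exact_mod_cast hsplit
  rw [avoiding_insert]
  linarith

lemma one_sub_pow_mul_card_avoiding_le {x : ℝ} (hx : x ≤ 1) (S E : Finset ι)
    (h : ∀ E' ⊆ E, ∀ j ∈ E, j ∉ E' →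
      (#(A j ∩ avoiding A (S ∪ E')) : ℝ) ≤ x * #(avoiding A (S ∪ E'))) :
    (1 - x) ^ #E * #(avoiding A S) ≤ #(avoiding A (S ∪ E)) := by
  induction E using Finset.induction_on with
  | empty => simp
  | @insert j E hj ih =>
    have ih' := ih fun E' hE' k hk hkE' => h E' (hE'.trans (subset_insert _ _)) k
      (mem_insert_of_mem hk) hkE'
    have hj' := h E (subset_insert _ _) j (mem_insert_self _ _) hj
    rw [card_insert_of_notMem hj, pow_succ, union_insert]
    calc (1 - x) ^ #E * (1 - x) * #(avoiding A S)
        = (1 - x) * ((1 - x) ^ #E * #(avoiding A S)) := by ring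
      _ ≤ (1 - x) * #(avoiding A (S ∪ E)) := by gcongr
      _ ≤ _ := one_sub_mul_card_avoiding_le_card_avoiding_insert hj'

variable [Nonempty α] {vbl : ι → Finset V} {x : ℝ} {d : ℕ}

theorem card_inter_avoiding_le (hdep : ∀ i, DependsOn (· ∈ A i) ↑(vbl i))
    (hd : ∀ i, #{j | ¬Disjoint (vbl i) (vbl j)} ≤ d) (hx₀ : 0 ≤ x) (hx₁ : x ≤ 1)
    (hA : ∀ i, (#(A i) : ℝ) ≤ x * (1 - x) ^ d * Fintype.card (V → α)) (S : Finset ι) (i : ι) :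
    (#(A i ∩ avoiding A S) : ℝ) ≤ x * #(avoiding A S) := by
  induction S using Finset.strongInduction generalizing i with
  | H S ih =>
  set S₁ := S.filter fun j => ¬Disjoint (vbl i) (vbl j)
  set S₂ := S.filter fun j => Disjoint (vbl i) (vbl j)
  have hS : S₂ ∪ S₁ = S := filter_union_filter_not_eq _ S
  have hS₁ : #S₁ ≤ d := (card_le_card (filter_subset_filter _ (subset_univ S))).trans (hd i)
  have hindep : (#(A i ∩ avoiding A S₂) : ℝ) * Fintype.card (V → α)
      = #(A i) * #(avoiding A S₂) := by
    exact_mod_cast card_inter_mul_card_eq_of_disjoint (hdep i) (dependsOn_mem_avoiding hdep S₂)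
      ((disjoint_biUnion_right _ _ _).2 fun j hj => (mem_filter.1 hj).2)
  have hpeel : (1 - x) ^ #S₁ * #(avoiding A S₂) ≤ #(avoiding A S) := by
    rw [← hS]
    refine one_sub_pow_mul_card_avoiding_le hx₁ S₂ S₁ fun E' hE' j hj hjE' => ih _ ?_ j
    have hsub : S₂ ∪ E' ⊆ S₂ ∪ S₁ := union_subset_union_right hE'
    refine (ssubset_iff_of_subset (hS ▸ hsub)).2 ⟨j, hS ▸ mem_union_right _ hj, ?_⟩
    simp only [S₁, S₂, mem_union, mem_filter] at hj ⊢
    tauto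
  have hΩ : (0 : ℝ) < Fintype.card (V → α) := by exact_mod_cast Fintype.card_pos
  calc (#(A i ∩ avoiding A S) : ℝ) ≤ #(A i ∩ avoiding A S₂) := by
        gcongr; exact avoiding_anti (filter_subset _ _)
    _ = #(A i) * #(avoiding A S₂) / Fintype.card (V → α) := by
        rw [← hindep, mul_div_cancel_right₀ _ hΩ.ne']
    _ ≤ x * ((1 - x) ^ d * #(avoiding A S₂)) := by
        rw [div_le_iff₀ hΩ]; nlinarith [hA i]
    _ ≤ x * ((1 - x) ^ #S₁ * #(avoiding A S₂)) := by
        have : (1 - x) ^ d ≤ (1 - x) ^ #S₁ := pow_le_pow_of_le_one (by linarith) (by linarith) hS₁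
        gcongr
    _ ≤ x * #(avoiding A S) := by gcongr

theorem lovasz_local_lemma (hdep : ∀ i, DependsOn (· ∈ A i) ↑(vbl i))
    (hd : ∀ i, #{j | ¬Disjoint (vbl i) (vbl j)} ≤ d) (hx₀ : 0 ≤ x) (hx₁ : x < 1)
    (hA : ∀ i, (#(A i) : ℝ) ≤ x * (1 - x) ^ d * Fintype.card (V → α)) :
    ∃ f : V → α, ∀ i, f ∉ A i := by
  have hpeel := one_sub_pow_mul_card_avoiding_le hx₁.le ∅ univ fun E' _ j _ _ =>
    card_inter_avoiding_le hdep hd hx₀ hx₁.le hA _ j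
  rw [empty_union, avoiding_empty, card_univ] at hpeel
  have hpos : (0 : ℝ) < #(avoiding A univ) :=
    lt_of_lt_of_le (by have := sub_pos.2 hx₁; positivity) hpeel
  obtain ⟨f, hf⟩ := card_pos.1 (by exact_mod_cast hpos)
  exact ⟨f, fun i => mem_avoiding.1 hf i (mem_univ i)⟩

lemma exp_neg_one_le_one_sub_inv_pow (d : ℕ) : Real.exp (-1) ≤ (1 - ((d : ℝ) + 1)⁻¹) ^ d := by
  rcases Nat.eq_zero_or_pos d with rfl | hd
  · simp [Real.exp_le_one_iff]
  have hd' : (0 : ℝ) < d := by exact_mod_cast hd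
  have hprod : (1 - ((d : ℝ) + 1)⁻¹) * (1 + (d : ℝ)⁻¹) = 1 := by field_simp; ring
  rw [Real.exp_neg, inv_le_iff_one_le_mul₀' (Real.exp_pos 1)]
  calc (1 : ℝ) = ((1 - ((d : ℝ) + 1)⁻¹) * (1 + (d : ℝ)⁻¹)) ^ d := by rw [hprod, one_pow]
    _ ≤ (1 - ((d : ℝ) + 1)⁻¹) ^ d * Real.exp 1 := by
        have : (0 : ℝ) ≤ 1 - ((d : ℝ) + 1)⁻¹ := sub_nonneg.2 (inv_le_one_of_one_le₀ (by linarith))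
        rw [mul_pow]; gcongr; exact Real.one_add_inv_pow_le_exp
    _ = _ := mul_comm _ _

theorem lovasz_local_lemma_symmetric (hdep : ∀ i, DependsOn (· ∈ A i) ↑(vbl i))
    (hd : ∀ i, #{j | ¬Disjoint (vbl i) (vbl j)} ≤ d)
    (hA : ∀ i, #(A i) * (Real.exp 1 * (d + 1)) ≤ Fintype.card (V → α)) :
    ∃ f : V → α, ∀ i, f ∉ A i := by
  rcases Nat.eq_zero_or_pos d with rfl | hd₀
  · -- Every event then depends on no coordinate, so it is empty or everything.
    obtain ⟨f⟩ : Nonempty (V → α) := inferInstance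
    refine ⟨f, fun i hf => ?_⟩
    have hvbl : vbl i = ∅ := by
      by_contra hne
      have := card_eq_zero.1 (Nat.le_zero.1 (hd i))
      exact (filter_eq_empty_iff.1 this (mem_univ i)) (by simpa [disjoint_self] using hne)
    have hAi : A i = univ := eq_univ_of_forall fun g => (hdep i (by simp [hvbl])).mp hf
    have hΩ : (0 : ℝ) < Fintype.card (V → α) := by exact_mod_cast Fintype.card_pos
    have := hA i
    rw [hAi, card_univ, Nat.cast_zero, zero_add, mul_one] at this
    nlinarith [Real.add_one_le_exp 1]
  refine lovasz_local_lemma hdep hd (x := ((d : ℝ) + 1)⁻¹) (by positivity)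
    (inv_lt_one_of_one_lt₀ (by norm_cast; omega)) fun i => ?_
  have he := exp_neg_one_le_one_sub_inv_pow d
  rw [Real.exp_neg] at he
  calc (#(A i) : ℝ) = ((d : ℝ) + 1)⁻¹ * (Real.exp 1)⁻¹ * (#(A i) * (Real.exp 1 * (d + 1))) := by
        field_simp
    _ ≤ ((d : ℝ) + 1)⁻¹ * (1 - ((d : ℝ) + 1)⁻¹) ^ d * Fintype.card (V → α) := by
        have : (0 : ℝ) ≤ 1 - ((d : ℝ) + 1)⁻¹ := sub_nonneg.2 (inv_le_one_of_one_le₀ (by linarith))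
        gcongr
        exact hA i

end LocalLemma

section ExponentialMoment

variable {V α : Type*} [Fintype V] [DecidableEq V] [Fintype α] [DecidableEq α] [Nonempty α]

lemma sum_ite_mem_le_card_mul_exp (B : Finset α) (β : ℝ) :
    ∑ a, (if a ∈ B then β else 1) ≤ Fintype.card α * Real.exp ((β - 1) * #B / Fintype.card α) := by
  have hα : (0 : ℝ) < Fintype.card α := by exact_mod_cast Fintype.card_pos
  have hsum : ∑ a, (if a ∈ B then β else 1)
      = Fintype.card α * (1 + (β - 1) * #B / Fintype.card α) := by
    have hsplit : ∀ a, (if a ∈ B then β else 1) = 1 + if a ∈ B then β - 1 else 0 := fun a => by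
      split_ifs <;> ring
    simp_rw [hsplit]
    rw [sum_add_distrib, sum_ite_mem, univ_inter, sum_const, sum_const, card_univ]
    field_simp
    simp [mul_comm]
  rw [hsum]
  gcongr
  linarith [Real.add_one_le_exp ((β - 1) * #B / Fintype.card α)]

theorem sum_pow_card_filter_mem_le (W : Finset V) (B : Finset α) {β : ℝ} (hβ : 0 ≤ β) :
    ∑ f : V → α, β ^ #{u ∈ W | f u ∈ B}
      ≤ Fintype.card α ^ Fintype.card V * Real.exp ((β - 1) * #B * #W / Fintype.card α) := by
  set g : V → α → ℝ := fun u a => if u ∈ W ∧ a ∈ B then β else 1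
  have hprod : ∀ f : V → α, β ^ #{u ∈ W | f u ∈ B} = ∏ u, g u (f u) := fun f => by
    rw [prod_ite, prod_const, prod_const_one, mul_one]
    congr 2; ext; simp
  have hfactor : ∀ u, ∑ a, g u a
      ≤ Fintype.card α * Real.exp (if u ∈ W then (β - 1) * #B / Fintype.card α else 0) := by
    intro u
    by_cases hu : u ∈ W
    · simpa [g, hu] using sum_ite_mem_le_card_mul_exp B β
    · simp [g, hu]
  calc ∑ f : V → α, β ^ #{u ∈ W | f u ∈ B} = ∏ u, ∑ a, g u a := by
        rw [Fintype.prod_sum]; exact sum_congr rfl fun f _ => hprod f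
    _ ≤ ∏ u, (Fintype.card α * Real.exp (if u ∈ W then (β - 1) * #B / Fintype.card α else 0)) :=
        prod_le_prod (fun u _ => sum_nonneg fun a _ => by positivity) fun u _ => hfactor u
    _ = _ := by
        rw [prod_mul_distrib, prod_const, card_univ, ← Real.exp_sum, sum_ite_mem, univ_inter,
          sum_const, nsmul_eq_mul]
        ring_nf

theorem card_filter_le_card_filter_mem_mul_pow_le (W : Finset V) (B : Finset α) {β : ℝ}
    (hβ : 1 ≤ β) (T : ℕ) :
    #{f : V → α | T ≤ #{u ∈ W | f u ∈ B}} * β ^ T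
      ≤ Fintype.card α ^ Fintype.card V * Real.exp ((β - 1) * #B * #W / Fintype.card α) := by
  refine le_trans ?_ (sum_pow_card_filter_mem_le W B (by linarith))
  rw [← nsmul_eq_mul, ← sum_const]
  calc ∑ _ ∈ {f : V → α | T ≤ #{u ∈ W | f u ∈ B}}, β ^ T
      ≤ ∑ f ∈ {f : V → α | T ≤ #{u ∈ W | f u ∈ B}}, β ^ #{u ∈ W | f u ∈ B} :=
        sum_le_sum fun f hf => pow_le_pow_right₀ hβ (mem_filter.1 hf).2
    _ ≤ _ := sum_le_univ_sum_of_nonneg fun f => by positivity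

end ExponentialMoment

section Plane

variable (K : Type*) [Field K] [Fintype K] [DecidableEq K]

/-- The affine points `inl (x, y)` together with the points at infinity `inr m` of the
non-vertical directions: the projective plane over `K` minus the vertical point at infinity. -/
abbrev PlanePoint := (K × K) ⊕ K

variable {K}

/-- The line `y = m x + b` for `ℓ = (m, b)`, with its point at infinity. -/
def line (ℓ : K × K) : Finset (PlanePoint K) :=
  insert (.inr ℓ.1) (univ.image fun x => .inl (x, ℓ.1 * x + ℓ.2))

@[simp]
lemma inl_mem_line {ℓ : K × K} {x y : K} : .inl (x, y) ∈ line ℓ ↔ y = ℓ.1 * x + ℓ.2 := by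
  simp [line, eq_comm]

@[simp]
lemma inr_mem_line {ℓ : K × K} {m : K} : .inr m ∈ line ℓ ↔ m = ℓ.1 := by
  simp [line]

lemma card_line_le (ℓ : K × K) : #(line ℓ) ≤ Fintype.card K + 1 :=
  (card_insert_le _ _).trans (Nat.add_le_add_right (card_image_le.trans_eq (card_univ)) 1)

lemma line_inter_nonempty (ℓ ℓ' : K × K) : (line ℓ ∩ line ℓ').Nonempty := by
  by_cases h : ℓ.1 = ℓ'.1
  · exact ⟨.inr ℓ.1, by simp [h]⟩
  · have hne : ℓ.1 - ℓ'.1 ≠ 0 := sub_ne_zero.2 h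
    refine ⟨.inl ((ℓ'.2 - ℓ.2) / (ℓ.1 - ℓ'.1), ℓ.1 * ((ℓ'.2 - ℓ.2) / (ℓ.1 - ℓ'.1)) + ℓ.2), ?_⟩
    simp only [mem_inter, inl_mem_line, true_and]
    field_simp
    ring

lemma card_filter_mem_line_le (p : PlanePoint K) : #{ℓ | p ∈ line ℓ} ≤ Fintype.card K := by
  obtain ⟨x, y⟩ | m := p
  · calc #{ℓ | .inl (x, y) ∈ line ℓ} ≤ #(univ.image fun m : K => (m, y - m * x)) := by
          refine card_le_card fun ℓ hℓ => ?_
          simp only [mem_filter, mem_univ, true_and, inl_mem_line] at hℓ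
          exact mem_image.2 ⟨ℓ.1, mem_univ _, by ext <;> simp [hℓ]⟩
      _ ≤ Fintype.card K := card_image_le.trans_eq card_univ
  · calc #{ℓ | .inr m ∈ line ℓ} ≤ #(univ.image fun b : K => (m, b)) := by
          refine card_le_card fun ℓ hℓ => ?_
          simp only [mem_filter, mem_univ, true_and, inr_mem_line] at hℓ
          exact mem_image.2 ⟨ℓ.2, mem_univ _, by ext <;> simp [hℓ]⟩
      _ ≤ Fintype.card K := card_image_le.trans_eq card_univ

end Plane

section Graph

variable {V : Type*} [Fintype V] [DecidableEq V] (G : SimpleGraph V) [DecidableRel G.Adj] {Δ : ℕ}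

lemma card_filter_not_disjoint_neighborFinset_le (hG : G.IsRegularOfDegree Δ) (v : V) :
    #{w | ¬Disjoint (G.neighborFinset v) (G.neighborFinset w)} ≤ Δ ^ 2 := by
  calc #{w | ¬Disjoint (G.neighborFinset v) (G.neighborFinset w)}
      ≤ #((G.neighborFinset v).biUnion fun u => G.neighborFinset u) := by
        refine card_le_card fun w hw => ?_
        obtain ⟨u, hvu, hwu⟩ := not_disjoint_iff.1 (mem_filter.1 hw).2
        rw [mem_neighborFinset] at hwu
        exact mem_biUnion.2 ⟨u, hvu, (G.mem_neighborFinset u w).2 hwu.symm⟩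
    _ ≤ ∑ u ∈ G.neighborFinset v, #(G.neighborFinset u) := card_biUnion_le
    _ = Δ ^ 2 := by
        rw [sum_congr rfl fun u _ => (G.card_neighborFinset_eq_degree u).trans (hG u), sum_const,
          G.card_neighborFinset_eq_degree, hG v, smul_eq_mul, sq]

variable {L P : Type*} [Fintype L] [DecidableEq L] [Nonempty L] [Fintype P] [DecidableEq P]

theorem exists_forall_card_filter_mem_le (hG : G.IsRegularOfDegree Δ) (I : L → Finset P) {m : ℕ}
    (hm : 0 < m) (hI : ∀ p, #{ℓ | p ∈ I ℓ} * m ≤ Fintype.card L) {β : ℝ} (hβ : 1 ≤ β) (T : ℕ)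
    (hT : Real.exp ((β - 1) * Δ / m) * (Real.exp 1 * (Δ ^ 2 * Fintype.card P + 1)) ≤ β ^ (T + 1)) :
    ∃ f : V → L, ∀ v p, #{u ∈ G.neighborFinset v | p ∈ I (f u)} ≤ T := by
  set B : P → Finset L := fun p => {ℓ | p ∈ I ℓ}
  set A : V × P → Finset (V → L) := fun i => {f | T + 1 ≤ #{u ∈ G.neighborFinset i.1 | f u ∈ B i.2}}
  have hdep : ∀ i, DependsOn (· ∈ A i) ↑(G.neighborFinset i.1) := fun i f g hfg => by
    simp only [A, mem_filter, mem_univ, true_and]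
    rw [filter_congr fun u hu => by rw [hfg u hu]]
  have hd : ∀ i : V × P, #{j : V × P | ¬Disjoint (G.neighborFinset i.1) (G.neighborFinset j.1)}
      ≤ Δ ^ 2 * Fintype.card P := fun i => by
    calc _ ≤ #((univ.filter fun w => ¬Disjoint (G.neighborFinset i.1) (G.neighborFinset w)) ×ˢ
            (univ : Finset P)) :=
          card_le_card fun j hj => by simpa using hj
      _ ≤ Δ ^ 2 * Fintype.card P := by
          rw [card_product, card_univ]
          exact Nat.mul_le_mul_right _ (card_filter_not_disjoint_neighborFinset_le G hG i.1)
  have hA : ∀ i, #(A i) * (Real.exp 1 * ((Δ ^ 2 * Fintype.card P : ℕ) + 1))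
      ≤ Fintype.card (V → L) := fun ⟨v, p⟩ => by
    have hmoment := card_filter_le_card_filter_mem_mul_pow_le (G.neighborFinset v) (B p) hβ (T + 1)
    have hL : (0 : ℝ) < Fintype.card L := by exact_mod_cast Fintype.card_pos
    have hexp : (β - 1) * #(B p) * #(G.neighborFinset v) / Fintype.card L ≤ (β - 1) * Δ / m := by
      have hBp : (#(B p) : ℝ) * m ≤ Fintype.card L := by exact_mod_cast hI p
      rw [card_neighborFinset_eq_degree, hG v, div_le_div_iff₀ hL (by exact_mod_cast hm)]
      have : 0 ≤ (β - 1) * Δ := mul_nonneg (by linarith) (by positivity)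
      nlinarith
    refine le_of_mul_le_mul_right ?_ (pow_pos (by linarith : (0 : ℝ) < β) (T + 1))
    push_cast
    calc #(A (v, p)) * (Real.exp 1 * (Δ ^ 2 * Fintype.card P + 1)) * β ^ (T + 1)
        = #(A (v, p)) * β ^ (T + 1) * (Real.exp 1 * (Δ ^ 2 * Fintype.card P + 1)) := by ring
      _ ≤ Fintype.card L ^ Fintype.card V * Real.exp ((β - 1) * Δ / m)
            * (Real.exp 1 * (Δ ^ 2 * Fintype.card P + 1)) := by
        exact mul_le_mul_of_nonneg_right (hmoment.trans (by gcongr)) (by positivity)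
      _ ≤ Fintype.card L ^ Fintype.card V * β ^ (T + 1) := by
        rw [mul_assoc]; gcongr
      _ = Fintype.card (V → L) * β ^ (T + 1) := by rw [Fintype.card_fun]; push_cast; ring
  obtain ⟨f, hf⟩ := lovasz_local_lemma_symmetric hdep hd hA
  refine ⟨f, fun v p => ?_⟩
  have := hf (v, p)
  simp only [A, B, mem_filter, mem_univ, true_and, not_le] at this
  omega

end Graph

section ColourSets

theorem exists_disjoint_blocks (P : Type*) [Fintype P] (s : ℕ) :
    ∃ block : P → Finset ℕ, (∀ p, #(block p) = s) ∧
      (∀ p, block p ⊆ range (Fintype.card P * s)) ∧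
      Pairwise fun p p' => Disjoint (block p) (block p') := by
  classical
  let code : P × Fin s ≃ Fin (Fintype.card P * s) :=
    ((Fintype.equivFin P).prodCongr (Equiv.refl _)).trans finProdFinEquiv
  have hcode : Function.Injective fun x => (code x : ℕ) := Fin.val_injective.comp code.injective
  refine ⟨fun p => univ.image fun i => (code (p, i) : ℕ), fun p => ?_, fun p => ?_, ?_⟩
  · exact (card_image_of_injective _ (hcode.comp (Prod.mk_right_injective p))).trans
      (card_fin s)
  · exact image_subset_iff.2 fun i _ => mem_range.2 (code (p, i)).isLt
  · intro p p' hpp'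
    refine disjoint_left.2 fun c hc hc' => hpp' ?_
    obtain ⟨i, -, rfl⟩ := mem_image.1 hc
    obtain ⟨j, -, hj⟩ := mem_image.1 hc'
    exact (Prod.ext_iff.1 (hcode hj)).1.symm

variable {V L P : Type*} [DecidableEq P] (I : L → Finset P) (block : P → Finset ℕ) (f : V → L)

lemma card_filter_mem_biUnion_le (hblock : Pairwise fun p p' => Disjoint (block p) (block p'))
    (W : Finset V) {T : ℕ} (hf : ∀ p, #{u ∈ W | p ∈ I (f u)} ≤ T) (c : ℕ) :
    #{u ∈ W | c ∈ (I (f u)).biUnion block} ≤ T := by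
  by_cases hc : ∃ p, c ∈ block p
  · obtain ⟨p, hcp⟩ := hc
    refine le_trans (card_le_card fun u hu => ?_) (hf p)
    obtain ⟨huW, hu⟩ := mem_filter.1 hu
    obtain ⟨p', hp', hcp'⟩ := mem_biUnion.1 hu
    obtain rfl : p' = p := by_contra fun h => disjoint_left.1 (hblock h) hcp' hcp
    exact mem_filter.2 ⟨huW, hp'⟩
  · rw [filter_false_of_mem fun u _ hu =>
      let ⟨p, _, hcp⟩ := mem_biUnion.1 hu; hc ⟨p, hcp⟩]
    exact Nat.zero_le _

end ColourSets

theorem exists_colourSets {K V : Type*} [Field K] [Fintype K] [DecidableEq K] [Fintype V]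
    [DecidableEq V] (G : SimpleGraph V) [DecidableRel G.Adj] {Δ : ℕ} (hG : G.IsRegularOfDegree Δ)
    (s : ℕ) {β : ℝ} (hβ : 1 ≤ β) (T : ℕ)
    (hT : Real.exp ((β - 1) * Δ / Fintype.card K) *
      (Real.exp 1 * (Δ ^ 2 * (Fintype.card K ^ 2 + Fintype.card K) + 1)) ≤ β ^ (T + 1)) :
    ∃ S : V → Finset ℕ, (∀ v, S v ⊆ range ((Fintype.card K ^ 2 + Fintype.card K) * s)) ∧
      (∀ v, #(S v) ≤ (Fintype.card K + 1) * s) ∧ (∀ u v, s ≤ #(S u ∩ S v)) ∧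
      ∀ v c, #{u ∈ G.neighborFinset v | c ∈ S u} ≤ T := by
  have hK : ∀ p : PlanePoint K, #{ℓ | p ∈ line ℓ} * Fintype.card K ≤ Fintype.card (K × K) :=
    fun p => by rw [Fintype.card_prod]; gcongr; exact card_filter_mem_line_le p
  obtain ⟨f, hf⟩ := exists_forall_card_filter_mem_le G hG line Fintype.card_pos hK hβ T
    (by simpa [sq] using hT)
  obtain ⟨block, hcard, hrange, hdisj⟩ := exists_disjoint_blocks (PlanePoint K) s
  refine ⟨fun v => (line (f v)).biUnion block, fun v => ?_, fun v => ?_, fun u v => ?_,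
    fun v => card_filter_mem_biUnion_le line block f hdisj _ (hf v)⟩
  · refine biUnion_subset.2 fun p _ => (hrange p).trans ?_
    rw [Fintype.card_sum, Fintype.card_prod, sq]
  · exact (card_biUnion_le_card_mul _ _ s fun p _ => (hcard p).le).trans
      (Nat.mul_le_mul_right _ (card_line_le _))
  · obtain ⟨p, hp⟩ := line_inter_nonempty (f u) (f v)
    obtain ⟨hpu, hpv⟩ := mem_inter.1 hp
    rw [← hcard p]
    exact card_le_card fun c hc =>
      mem_inter.2 ⟨mem_biUnion.2 ⟨_, hpu, hc⟩, mem_biUnion.2 ⟨_, hpv, hc⟩⟩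

lemma exists_prime_lt_mul_le_two_mul_add {ε : ℝ} (hε : 0 < ε) {c : ℝ} (hc : 0 < c) :
    ∃ q : ℕ, q.Prime ∧ c < ε * q ∧ ε * q ≤ 2 * c + 2 * ε := by
  obtain ⟨q, hq, hmq, hqm⟩ := Nat.exists_prime_lt_and_le_two_mul ⌈c / ε⌉₊
    (Nat.ceil_pos.2 (by positivity)).ne'
  have hlo : c / ε < q := (Nat.le_ceil _).trans_lt (by exact_mod_cast hmq)
  have hhi : (q : ℝ) ≤ 2 * (c / ε + 1) :=
    (Nat.cast_le.2 hqm).trans (by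
      push_cast; linarith [Nat.ceil_lt_add_one (by positivity : 0 ≤ c / ε)])
  refine ⟨q, hq, by rwa [div_lt_iff₀' hε] at hlo, ?_⟩
  calc ε * q ≤ ε * (2 * (c / ε + 1)) := by gcongr
    _ = 2 * c + 2 * ε := by field_simp

section Numerics

variable {ε q Δ : ℝ}

lemma plane_colours_le (hε₀ : 0 < ε) (hε₁ : ε ≤ 1 / 1000) (hq₀ : 209 / 100 < ε * q)
    (hq₁ : ε * q ≤ 418 / 100 + 2 * ε) (hΔ : 10 ^ 4 ≤ ε ^ 2 * Δ) {s : ℝ}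
    (hs : s < ε ^ 2 * Δ / 18 + 1) : (q ^ 2 + q) * s ≤ (1 + ε) * Δ := by
  have hΔ₀ : 0 < Δ := pos_of_mul_pos_right (by linarith : 0 < ε ^ 2 * Δ) (by positivity)
  have hq : 1 ≤ q := by nlinarith
  have hq2 : ε ^ 2 * q ^ 2 ≤ 175 / 10 := by nlinarith
  have hΔq : 200 * q ^ 2 ≤ Δ := by nlinarith
  have h1 : ε ^ 2 * q ^ 2 * Δ ≤ 175 / 10 * Δ := by gcongr
  have h2 : ε * (ε * q) * Δ ≤ 1 / 1000 * 5 * Δ := by gcongr; linarith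
  calc (q ^ 2 + q) * s ≤ (q ^ 2 + q) * (ε ^ 2 * Δ / 18 + 1) := by gcongr
    _ = ε ^ 2 * q ^ 2 * Δ / 18 + ε * (ε * q) * Δ / 18 + q ^ 2 + q := by ring
    _ ≤ (1 + ε) * Δ := by nlinarith

lemma line_colours_le (hε₀ : 0 < ε) (hε₁ : ε ≤ 1 / 1000) (hq₀ : 0 ≤ q)
    (hq₁ : ε * q ≤ 418 / 100 + 2 * ε) (hΔ : 10 ^ 4 ≤ ε ^ 2 * Δ) {s : ℝ}
    (hs : s < ε ^ 2 * Δ / 18 + 1) : (q + 1) * s ≤ 4 * ε * Δ / 9 := by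
  have hΔ₀ : 0 < Δ := pos_of_mul_pos_right (by linarith : 0 < ε ^ 2 * Δ) (by positivity)
  have hq : q + 1 ≤ ε * Δ / 5 := by
    refine le_of_mul_le_mul_left ?_ hε₀
    nlinarith
  have h1 : ε * (ε * q) * Δ ≤ ε * 5 * Δ := by gcongr; linarith
  have h2 : ε * ε * Δ ≤ ε * (1 / 1000) * Δ := by gcongr
  calc (q + 1) * s ≤ (q + 1) * (ε ^ 2 * Δ / 18 + 1) := by gcongr
    _ = ε * (ε * q) * Δ / 18 + ε * ε * Δ / 18 + (q + 1) := by ring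
    _ ≤ 4 * ε * Δ / 9 := by nlinarith

lemma exp_one_mul_sq_mul_add_one_le_exp (hε₀ : 0 < ε) (hε₁ : ε ≤ 1 / 1000)
    (hq₀ : 209 / 100 < ε * q) (hq₁ : ε * q ≤ 418 / 100 + 2 * ε) (hΔ : 10 ^ 30 ≤ ε ^ 5 * Δ) :
    Real.exp 1 * (Δ ^ 2 * (q ^ 2 + q) + 1) ≤ Real.exp (ε * Δ / 20000) := by
  have hΔ₀ : 0 < Δ := pos_of_mul_pos_right (by linarith : 0 < ε ^ 5 * Δ) (by positivity)
  have h3 := Real.pow_div_factorial_le_exp (x := ε * Δ / 20000) (by positivity) 3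
  have he : Real.exp 1 ≤ 3 := by linarith [Real.exp_one_lt_d9]
  have hq1 : 1 ≤ q := by nlinarith
  have hεq : ε ^ 2 * q ^ 2 ≤ 18 := by nlinarith
  have hε2 : ε ^ 2 ≤ 1 := by nlinarith
  have hΔ1 : 1 ≤ Δ := by nlinarith [pow_le_one₀ hε₀.le (by linarith : ε ≤ 1) (n := 5)]
  have hD : ε ^ 2 * (Δ ^ 2 * (q ^ 2 + q) + 1) ≤ 37 * Δ ^ 2 := by
    have : ε ^ 2 * q ≤ ε ^ 2 * q ^ 2 := by gcongr; nlinarith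
    nlinarith [mul_le_mul_of_nonneg_left this (sq_nonneg Δ),
      mul_le_mul_of_nonneg_left hεq (sq_nonneg Δ)]
  have hcube : 111 * Δ ^ 2 ≤ ε ^ 2 * ((ε * Δ / 20000) ^ 3 / 6) := by
    have : ε ^ 2 * ((ε * Δ / 20000) ^ 3 / 6) = ε ^ 5 * Δ * Δ ^ 2 / (6 * 20000 ^ 3) := by ring
    rw [this, le_div_iff₀ (by norm_num)]
    nlinarith [mul_le_mul_of_nonneg_right hΔ (sq_nonneg Δ)]
  norm_num [Nat.factorial] at h3
  refine le_of_mul_le_mul_left ?_ (by positivity : 0 < ε ^ 2)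
  calc ε ^ 2 * (Real.exp 1 * (Δ ^ 2 * (q ^ 2 + q) + 1))
      = Real.exp 1 * (ε ^ 2 * (Δ ^ 2 * (q ^ 2 + q) + 1)) := by ring
    _ ≤ 3 * (37 * Δ ^ 2) := mul_le_mul he hD (by positivity) (by norm_num)
    _ ≤ ε ^ 2 * ((ε * Δ / 20000) ^ 3 / 6) := by linarith
    _ ≤ ε ^ 2 * Real.exp (ε * Δ / 20000) := by gcongr

lemma exp_mul_exp_one_mul_le_pow (hε₀ : 0 < ε) (hε₁ : ε ≤ 1 / 1000) (hq₀ : 209 / 100 < ε * q)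
    (hq₁ : ε * q ≤ 418 / 100 + 2 * ε) (hΔ : 10 ^ 30 ≤ ε ^ 5 * Δ) {T : ℕ} (hT : ε * Δ / 2 < T + 1) :
    Real.exp ((Real.exp (1 / 25) - 1) * Δ / q) * (Real.exp 1 * (Δ ^ 2 * (q ^ 2 + q) + 1))
      ≤ Real.exp (1 / 25) ^ (T + 1) := by
  have hΔ₀ : 0 < Δ := pos_of_mul_pos_right (by linarith : 0 < ε ^ 5 * Δ) (by positivity)
  have hq : 0 < q := pos_of_mul_pos_right (by linarith : 0 < ε * q) hε₀.le
  have hβ : Real.exp (1 / 25) - 1 ≤ 1 / 24 := by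
    have := Real.exp_bound_div_one_sub_of_interval (x := 1 / 25) (by norm_num) (by norm_num)
    norm_num at this ⊢; linarith
  -- The mean `Δ / q < εΔ / 2.09` of a count lies a constant factor below the threshold `εΔ / 2`.
  have hmean : (Real.exp (1 / 25) - 1) * Δ / q + ε * Δ / 20000 ≤ ε * Δ / 50 := by
    rw [div_add' _ _ _ hq.ne', div_le_iff₀ hq]
    nlinarith [mul_le_mul_of_nonneg_right hβ hΔ₀.le]
  have hpoly := exp_one_mul_sq_mul_add_one_le_exp hε₀ hε₁ hq₀ hq₁ hΔ
  calc Real.exp ((Real.exp (1 / 25) - 1) * Δ / q) * (Real.exp 1 * (Δ ^ 2 * (q ^ 2 + q) + 1))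
      ≤ Real.exp ((Real.exp (1 / 25) - 1) * Δ / q) * Real.exp (ε * Δ / 20000) := by gcongr
    _ ≤ Real.exp ((T + 1) * (1 / 25)) := by
        rw [← Real.exp_add, Real.exp_le_exp]; linarith
    _ = Real.exp (1 / 25) ^ (T + 1) := by rw [← Real.exp_nat_mul]; push_cast; rfl

end Numerics

/-- Let `ε ∈ (0, 10⁻³]`. There exists `Δ₀ = Δ₀(ε)` such that for every `Δ ≥ Δ₀` and
every `Δ`-regular finite simple graph `G`, there is a collection `{S v : v ∈ V(G)}` of
subsets of the colour set `{0, …, ⌊(1+ε)Δ⌋ - 1}` satisfying: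
(A.1) `|S v| ≤ 4εΔ/9` for every vertex `v`;
(A.2) `|S u ∩ S v| ≥ ε²Δ/18` for every edge `uv`;
(A.3) for every vertex `v` and colour `c`, the number of neighbours `u` of `v` with
`c ∈ S u` is at most `εΔ/2`. -/
theorem statement4 :
    ∀ ε : ℝ, 0 < ε → ε ≤ 1 / 1000 →
      ∃ Δ₀ : ℕ, ∀ Δ : ℕ, Δ₀ ≤ Δ →
        ∀ (V : Type) [Fintype V] [DecidableEq V] (G : SimpleGraph V) [DecidableRel G.Adj],
          G.IsRegularOfDegree Δ →
            ∃ S : V → Finset ℕ,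
              (∀ v : V, S v ⊆ Finset.range ⌊(1 + ε) * (Δ : ℝ)⌋₊) ∧
              (∀ v : V, ((S v).card : ℝ) ≤ 4 * ε * Δ / 9) ∧
              (∀ u v : V, G.Adj u v → ε ^ 2 * Δ / 18 ≤ ((S u ∩ S v).card : ℝ)) ∧
              (∀ (v : V) (c : ℕ),
                ((((G.neighborFinset v).filter (fun u => c ∈ S u)).card : ℝ)) ≤ ε * Δ / 2) := by
  intro ε hε₀ hε₁
  refine ⟨⌈10 ^ 30 / ε ^ 5⌉₊, fun Δ hΔ V _ _ G _ hG => ?_⟩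
  have hΔ₅ : (10 : ℝ) ^ 30 ≤ ε ^ 5 * Δ := by
    rw [← div_le_iff₀' (by positivity)]
    exact (Nat.le_ceil _).trans (by exact_mod_cast hΔ)
  have hΔ₂ : (10 : ℝ) ^ 4 ≤ ε ^ 2 * Δ := by
    have : ε ^ 5 ≤ ε ^ 2 := pow_le_pow_of_le_one hε₀.le (by linarith) (by norm_num)
    nlinarith
  obtain ⟨q, hq, hq₀, hq₁⟩ := exists_prime_lt_mul_le_two_mul_add hε₀ (c := 209 / 100) (by norm_num)
  have : Fact q.Prime := ⟨hq⟩
  have hT := exp_mul_exp_one_mul_le_pow hε₀ hε₁ hq₀ (by linarith) hΔ₅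
    (Nat.lt_floor_add_one (ε * Δ / 2))
  obtain ⟨S, hrange, hcard, hinter, hload⟩ := exists_colourSets (K := ZMod q) G hG
    ⌈ε ^ 2 * Δ / 18⌉₊ (Real.one_le_exp (by norm_num : (0 : ℝ) ≤ 1 / 25)) _
    (by simpa only [ZMod.card] using hT)
  have hs := Nat.ceil_lt_add_one (by positivity : 0 ≤ ε ^ 2 * Δ / 18)
  simp only [ZMod.card] at hrange hcard
  refine ⟨S, fun v => (hrange v).trans (range_subset_range.2 (Nat.le_floor ?_)), fun v => ?_,
    fun u v _ => ?_, fun v c => ?_⟩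
  · push_cast
    exact plane_colours_le hε₀ hε₁ hq₀ (by linarith) hΔ₂ hs
  · exact (Nat.cast_le.2 (hcard v)).trans (by
      push_cast; exact line_colours_le hε₀ hε₁ (by positivity) (by linarith) hΔ₂ hs)
  · exact (Nat.le_ceil _).trans (by exact_mod_cast hinter u v)
  · exact (Nat.cast_le.2 (hload v c)).trans (Nat.floor_le (by positivity))
end

section
/- Let ε ∈ (0, 10⁻³] and let Δ be sufficiently large in terms of ε. Set η = (1−e^{−2})². Define L₁ = (1+ε/9)Δ, T₁ = Δ, R₁ = εΔ/2 and, for i ≥ 1, L_{i+1} = η L_i − L_i^{2/3}, T_{i+1} = η T_i + T_i^{2/3}, R_{i+1} = (1−e^{−2}) R_i + R_i^{2/3}; also define L'_{i+1} = η^i L₁, T'_{i+1} = η^i T₁, R'_{i+1} = η^{i/2} R₁ for i ≥ 0. Let i* be the smallest positive integer i such that R_{i+1} < (ε²/18)²·Δ/128. Then for every 1 ≤ i ≤ i*+1: |L_i − L'_i| ≤ (L'_i)^{5/6}, |T_i − T'_i| ≤ (T'_i)^{5/6}, and |R_i − R'_i| ≤ (R'_i)^{5/6}. -/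
/-!
Each recursion has the form `x ↦ m x + s x^(2/3)` with `|s| ≤ 1` and `m ∈ [1/2, 7/8]`
(`m = η` for `L` and `T`, `m = √η = 1 - e⁻²` for `R`), and its comparison sequence is `a ↦ m a`.
If `|x - a| ≤ a^(5/6)`, the next error is at most `m a^(5/6) + 2 a^(2/3)`; as `m^(5/6) ≥ m + 1/96`
on `[1/2, 7/8]`, this is at most `(m a)^(5/6)` once `a ≥ 192⁶`. So the bounds propagate while the
comparison values stay above `192⁶`.

Before the stopping time, `R i` is at least the threshold `2b`, hence the bound forces `R' i ≥ b`.
This gives `(√η)^(i-1) ≥ ε³/41472`, so `T' i = η^(i-1) Δ ≥ ε⁶ Δ / 41472²`, and `L' i ≥ T' i`: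
all three comparison sequences stay above `192⁶` when `Δ ≥ 41472² · 192⁶ / ε⁶`.
-/

open Real

lemma one_sub_exp_neg_two_mem_Icc : 1 - exp (-2) ∈ Set.Icc (3 / 4 : ℝ) (7 / 8) := by
  have hlow : 4 ≤ exp 2 := by linarith [quadratic_le_exp_of_nonneg (x := 2) (by norm_num)]
  have hup : exp 2 ≤ 8 := by
    have : exp 2 = exp 1 * exp 1 := by rw [← exp_add]; norm_num
    nlinarith [exp_one_lt_d9, exp_pos 1]
  have hinv : exp (-2) * exp 2 = 1 := by rw [← exp_add]; norm_num
  have := exp_pos (-2)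
  constructor <;> nlinarith

lemma add_le_rpow_five_sixths {m : ℝ} (hm₁ : 1 / 2 ≤ m) (hm₂ : m ≤ 7 / 8) :
    m + 1 / 96 ≤ m ^ (5 / 6 : ℝ) := by
  have hm₀ : 0 ≤ m := by linarith
  set t := m ^ (1 / 6 : ℝ)
  have ht₀ : 0 ≤ t := rpow_nonneg hm₀ _
  have ht₁ : t ≤ 1 := rpow_le_one hm₀ (by linarith) (by norm_num)
  have ht6 : t ^ 6 = m := by rw [← rpow_mul_natCast hm₀]; norm_num
  have ht5 : t ^ 5 = m ^ (5 / 6 : ℝ) := by rw [← rpow_mul_natCast hm₀]; norm_num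
  -- `1 - t⁶ ≥ 1/8` forces `1 - t ≥ 1/48`; then `m^(5/6) - m = t⁵ (1 - t) ≥ 1/96`
  have hgap : 1 / 48 ≤ 1 - t := by
    nlinarith [pow_le_one₀ ht₀ ht₁ (n := 2), pow_le_one₀ ht₀ ht₁ (n := 3),
      pow_le_one₀ ht₀ ht₁ (n := 4), pow_le_one₀ ht₀ ht₁ (n := 5)]
  have hfive : 1 / 2 ≤ t ^ 5 := by
    nlinarith [pow_le_pow_of_le_one ht₀ ht₁ (show 5 ≤ 6 by norm_num)]
  rw [← ht5, ← ht6]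
  nlinarith

lemma mul_rpow_two_thirds_le_rpow_five_sixths {a : ℝ} (ha : 192 ^ 6 ≤ a) :
    192 * a ^ (2 / 3 : ℝ) ≤ a ^ (5 / 6 : ℝ) := by
  have ha₀ : 0 < a := by linarith [show (0 : ℝ) < 192 ^ 6 by norm_num]
  have hroot : 192 ≤ a ^ (1 / 6 : ℝ) := by
    calc (192 : ℝ) = ((192 : ℝ) ^ 6) ^ (1 / 6 : ℝ) := by
          rw [← rpow_natCast_mul (by norm_num)]; norm_num
      _ ≤ a ^ (1 / 6 : ℝ) := rpow_le_rpow (by norm_num) ha (by norm_num)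
  calc 192 * a ^ (2 / 3 : ℝ) ≤ a ^ (1 / 6 : ℝ) * a ^ (2 / 3 : ℝ) := by gcongr
    _ = a ^ (5 / 6 : ℝ) := by rw [← rpow_add ha₀]; norm_num

lemma rpow_two_thirds_le_of_abs_sub_le {a x : ℝ} (ha : 1 ≤ a) (hx : |x - a| ≤ a ^ (5 / 6 : ℝ)) :
    x ^ (2 / 3 : ℝ) ≤ 2 * a ^ (2 / 3 : ℝ) := by
  have hle : a ^ (5 / 6 : ℝ) ≤ a := rpow_le_self_of_one_le ha (by norm_num)
  obtain ⟨hx₁, hx₂⟩ := abs_le.mp hx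
  calc x ^ (2 / 3 : ℝ) ≤ (2 * a) ^ (2 / 3 : ℝ) :=
        rpow_le_rpow (by linarith) (by linarith) (by norm_num)
    _ = 2 ^ (2 / 3 : ℝ) * a ^ (2 / 3 : ℝ) := mul_rpow (by norm_num) (by linarith)
    _ ≤ 2 * a ^ (2 / 3 : ℝ) := by
      gcongr
      exact rpow_le_self_of_one_le (by norm_num) (by norm_num)

lemma abs_sub_mul_le_rpow_five_sixths {m a x s : ℝ} (hm₁ : 1 / 2 ≤ m) (hm₂ : m ≤ 7 / 8)
    (ha : 192 ^ 6 ≤ a) (hx : |x - a| ≤ a ^ (5 / 6 : ℝ)) (hs : |s| ≤ 1) :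
    |m * x + s * x ^ (2 / 3 : ℝ) - m * a| ≤ (m * a) ^ (5 / 6 : ℝ) := by
  have hm₀ : 0 ≤ m := by linarith
  have ha₁ : 1 ≤ a := le_trans (by norm_num) ha
  have hx₀ : 0 ≤ x := by
    linarith [(abs_le.mp hx).1, rpow_le_self_of_one_le ha₁ (show (5 / 6 : ℝ) ≤ 1 by norm_num)]
  have hsmall := mul_rpow_two_thirds_le_rpow_five_sixths ha
  have hx23 := rpow_two_thirds_le_of_abs_sub_le ha₁ hx
  calc |m * x + s * x ^ (2 / 3 : ℝ) - m * a| = |m * (x - a) + s * x ^ (2 / 3 : ℝ)| := by ring_nf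
    _ ≤ |m * (x - a)| + |s * x ^ (2 / 3 : ℝ)| := abs_add_le _ _
    _ = m * |x - a| + |s| * x ^ (2 / 3 : ℝ) := by
      rw [abs_mul, abs_mul, abs_of_nonneg hm₀, abs_of_nonneg (rpow_nonneg hx₀ _)]
    _ ≤ m * a ^ (5 / 6 : ℝ) + 1 * (2 * a ^ (2 / 3 : ℝ)) := by gcongr
    _ ≤ (m + 1 / 96) * a ^ (5 / 6 : ℝ) := by linarith
    _ ≤ m ^ (5 / 6 : ℝ) * a ^ (5 / 6 : ℝ) := by gcongr; exact add_le_rpow_five_sixths hm₁ hm₂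
    _ = (m * a) ^ (5 / 6 : ℝ) := (mul_rpow hm₀ (by linarith)).symm

lemma abs_sub_le_rpow_five_sixths_of_recurrence {m s : ℝ} (hm₁ : 1 / 2 ≤ m) (hm₂ : m ≤ 7 / 8)
    (hs : |s| ≤ 1) {x a : ℕ → ℝ} {n : ℕ}
    (hx : ∀ i, 1 ≤ i → x (i + 1) = m * x i + s * x i ^ (2 / 3 : ℝ))
    (ha : ∀ k, a (k + 1) = m ^ k * x 1) (hx₁ : 0 ≤ x 1)
    (hlarge : ∀ k, k + 1 ≤ n → |x (k + 1) - a (k + 1)| ≤ a (k + 1) ^ (5 / 6 : ℝ) →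
      192 ^ 6 ≤ m ^ k * x 1) :
    ∀ i, 1 ≤ i → i ≤ n + 1 → |x i - a i| ≤ a i ^ (5 / 6 : ℝ) := by
  intro i hi
  induction i, hi using Nat.le_induction with
  | base =>
    intro _
    rw [ha 0, pow_zero, one_mul, sub_self, abs_zero]
    positivity
  | succ i hi ih =>
    intro hin
    have hprev := ih (by omega)
    obtain ⟨k, rfl⟩ := Nat.exists_eq_add_of_le' hi
    have hk := hlarge k (by omega) hprev
    rw [← ha] at hk
    rw [hx _ hi, ha, pow_succ', mul_assoc, ← ha]
    exact abs_sub_mul_le_rpow_five_sixths hm₁ hm₂ hk hprev hs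

lemma le_of_abs_sub_le_rpow_five_sixths {a x b : ℝ} (ha₀ : 0 ≤ a) (hb : 1 ≤ b)
    (hx : |x - a| ≤ a ^ (5 / 6 : ℝ)) (hbx : 2 * b ≤ x) : b ≤ a := by
  by_contra! hab
  have : a ^ (5 / 6 : ℝ) ≤ b := calc
    a ^ (5 / 6 : ℝ) ≤ b ^ (5 / 6 : ℝ) := rpow_le_rpow ha₀ hab.le (by norm_num)
    _ ≤ b := rpow_le_self_of_one_le hb (by norm_num)
  linarith [(abs_le.mp hx).2]

lemma abs_sub_le_rpow_five_sixths_of_stoppingTime {m s b : ℝ} (hm₁ : 1 / 2 ≤ m) (hm₂ : m ≤ 7 / 8)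
    (hs : |s| ≤ 1) (hb : 192 ^ 6 ≤ b) {x a : ℕ → ℝ} {n : ℕ}
    (hx : ∀ i, 1 ≤ i → x (i + 1) = m * x i + s * x i ^ (2 / 3 : ℝ))
    (ha : ∀ k, a (k + 1) = m ^ k * x 1) (hb₁ : b ≤ x 1)
    (hn : ∀ j, 1 ≤ j → x (j + 1) < 2 * b → n ≤ j) :
    (∀ i, 1 ≤ i → i ≤ n + 1 → |x i - a i| ≤ a i ^ (5 / 6 : ℝ)) ∧
      ∀ k, k + 1 ≤ n → b ≤ m ^ k * x 1 := by
  have hx₁ : 0 ≤ x 1 := by linarith [show (0 : ℝ) ≤ 192 ^ 6 by positivity]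
  have hlow : ∀ k, k + 1 ≤ n → |x (k + 1) - a (k + 1)| ≤ a (k + 1) ^ (5 / 6 : ℝ) →
      b ≤ m ^ k * x 1 := by
    intro k hkn hxk
    rw [← ha]
    rcases Nat.eq_zero_or_pos k with rfl | hk
    · rwa [ha, pow_zero, one_mul]
    · have ha₀ : 0 ≤ a (k + 1) := by rw [ha]; exact mul_nonneg (pow_nonneg (by linarith) _) hx₁
      refine le_of_abs_sub_le_rpow_five_sixths ha₀ (le_trans (by norm_num) hb) hxk
        (not_lt.mp fun hlt => ?_)
      have := hn k hk hlt
      omega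
  have htrack := abs_sub_le_rpow_five_sixths_of_recurrence hm₁ hm₂ hs hx ha hx₁
    (fun k hk hxk => hb.trans (hlow k hk hxk))
  exact ⟨htrack, fun k hk => hlow k hk (htrack (k + 1) (by omega) (by omega))⟩

lemma sq_rpow_natCast_div_two {μ : ℝ} (hμ : 0 ≤ μ) (k : ℕ) : (μ ^ 2) ^ ((k : ℝ) / 2) = μ ^ k := by
  rw [← rpow_natCast_mul hμ, ← rpow_natCast]; push_cast; ring_nf

lemma lower_bounds_of_le_div_pow_six {ε Δ : ℝ} (hε₀ : 0 < ε) (hε₁ : ε ≤ 1)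
    (hΔ : 41472 ^ 2 * 192 ^ 6 / ε ^ 6 ≤ Δ) :
    0 < Δ ∧ 192 ^ 6 ≤ ε ^ 6 * Δ / 41472 ^ 2 ∧ 192 ^ 6 ≤ ε ^ 4 * Δ / 82944 ∧
      ε ^ 4 * Δ / 82944 ≤ ε * Δ / 2 := by
  have hΔ₀ : 0 < Δ := lt_of_lt_of_le (by positivity) hΔ
  have hc : 192 ^ 6 ≤ ε ^ 6 * Δ / 41472 ^ 2 := by
    rw [div_le_iff₀ (by positivity)] at hΔ
    rw [le_div_iff₀ (by positivity)]
    linarith [mul_comm Δ (ε ^ 6)]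
  have h64 : ε ^ 6 * Δ ≤ ε ^ 4 * Δ :=
    mul_le_mul_of_nonneg_right (pow_le_pow_of_le_one hε₀.le hε₁ (by norm_num)) hΔ₀.le
  have h41 : ε ^ 4 * Δ ≤ ε * Δ :=
    mul_le_mul_of_nonneg_right (pow_le_of_le_one hε₀.le hε₁ (by norm_num)) hΔ₀.le
  exact ⟨hΔ₀, hc, by linarith, by linarith [mul_pos hε₀ hΔ₀]⟩

/-- Let `ε ∈ (0, 10⁻³]`, let `Δ` be sufficiently large in terms of `ε`, and set
`η = (1−e⁻²)²`. For the sequences defined by `L 1 = (1+ε/9)Δ`, `T 1 = Δ`, `R 1 = εΔ/2`,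
the recurrences `L (i+1) = η L i − (L i)^(2/3)`, `T (i+1) = η T i + (T i)^(2/3)`,
`R (i+1) = (1−e⁻²) R i + (R i)^(2/3)` for `i ≥ 1`, the comparison sequences
`L' (i+1) = ηⁱ L 1`, `T' (i+1) = ηⁱ T 1`, `R' (i+1) = η^(i/2) R 1` for `i ≥ 0`, and
`i*` the smallest positive integer `i` with `R (i+1) < (ε²/18)²·Δ/128`, one has
`|L i − L' i| ≤ (L' i)^(5/6)`, `|T i − T' i| ≤ (T' i)^(5/6)` and
`|R i − R' i| ≤ (R' i)^(5/6)` for every `1 ≤ i ≤ i*+1`. -/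
theorem statement8 (ε : ℝ) (hε0 : 0 < ε) (hε1 : ε ≤ 1 / 1000) :
    ∃ Δ₀ : ℝ, ∀ Δ : ℝ, Δ₀ ≤ Δ →
      ∀ (L T R L' T' R' : ℕ → ℝ) (istar : ℕ),
        L 1 = (1 + ε / 9) * Δ →
        T 1 = Δ →
        R 1 = ε * Δ / 2 →
        (∀ i : ℕ, 1 ≤ i →
          L (i + 1) = (1 - Real.exp (-2)) ^ 2 * L i - L i ^ ((2 : ℝ) / 3)) →
        (∀ i : ℕ, 1 ≤ i →
          T (i + 1) = (1 - Real.exp (-2)) ^ 2 * T i + T i ^ ((2 : ℝ) / 3)) →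
        (∀ i : ℕ, 1 ≤ i →
          R (i + 1) = (1 - Real.exp (-2)) * R i + R i ^ ((2 : ℝ) / 3)) →
        (∀ i : ℕ, L' (i + 1) = ((1 - Real.exp (-2)) ^ 2) ^ i * L 1) →
        (∀ i : ℕ, T' (i + 1) = ((1 - Real.exp (-2)) ^ 2) ^ i * T 1) →
        (∀ i : ℕ, R' (i + 1) = ((1 - Real.exp (-2)) ^ 2) ^ ((i : ℝ) / 2) * R 1) →
        1 ≤ istar →
        R (istar + 1) < (ε ^ 2 / 18) ^ 2 * Δ / 128 →
        (∀ j : ℕ, 1 ≤ j → R (j + 1) < (ε ^ 2 / 18) ^ 2 * Δ / 128 → istar ≤ j) →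
        ∀ i : ℕ, 1 ≤ i → i ≤ istar + 1 →
          |L i - L' i| ≤ L' i ^ ((5 : ℝ) / 6) ∧
          |T i - T' i| ≤ T' i ^ ((5 : ℝ) / 6) ∧
          |R i - R' i| ≤ R' i ^ ((5 : ℝ) / 6) := by
  obtain ⟨hμ₁, hμ₂⟩ := one_sub_exp_neg_two_mem_Icc
  set μ := 1 - exp (-2)
  refine ⟨41472 ^ 2 * 192 ^ 6 / ε ^ 6, fun Δ hΔ L T R L' T' R' istar hL1 hT1 hR1 hL hT hR hL' hT'
    hR' _ _ hmin => ?_⟩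
  obtain ⟨hΔ₀, hc, hb, hbR⟩ := lower_bounds_of_le_div_pow_six hε0 (by linarith) hΔ
  -- the stopping threshold `(ε²/18)²Δ/128` is `2b` with `b = ε⁴Δ/82944`
  obtain ⟨hR, hRlow⟩ := abs_sub_le_rpow_five_sixths_of_stoppingTime (m := μ) (s := 1) (x := R)
    (a := R') (by linarith) (by linarith) (by norm_num) hb (fun i hi => by rw [hR i hi, one_mul])
    (fun k => by rw [hR' k, sq_rpow_natCast_div_two (by linarith)]) (hR1 ▸ hbR)
    (fun j hj hlt => hmin j hj (by linarith))
  have hη : ∀ k, k + 1 ≤ istar → 192 ^ 6 ≤ (μ ^ 2) ^ k * Δ := fun k hk => by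
    have hμk : ε ^ 3 / 41472 ≤ μ ^ k := by
      have := hR1 ▸ hRlow k hk
      rw [div_le_iff₀ (by norm_num)]; nlinarith [mul_pos hε0 hΔ₀]
    calc (192 : ℝ) ^ 6 ≤ (ε ^ 3 / 41472) ^ 2 * Δ := hc.trans_eq (by ring)
      _ ≤ (μ ^ k) ^ 2 * Δ := by gcongr
      _ = (μ ^ 2) ^ k * Δ := by rw [pow_right_comm]
  have hL := abs_sub_le_rpow_five_sixths_of_recurrence (m := μ ^ 2) (s := -1) (n := istar)
    (by nlinarith) (by nlinarith) (by norm_num) (fun i hi => by rw [hL i hi]; ring) hL'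
    (by rw [hL1]; positivity) fun k hk _ => (hη k hk).trans (by rw [hL1]; gcongr; linarith)
  have hT := abs_sub_le_rpow_five_sixths_of_recurrence (m := μ ^ 2) (s := 1) (n := istar)
    (by nlinarith) (by nlinarith) (by norm_num) (fun i hi => by rw [hT i hi, one_mul]) hT'
    (by rw [hT1]; positivity) fun k hk _ => hT1 ▸ hη k hk
  exact fun i hi hin => ⟨hL i hi hin, hT i hi hin, hR i hi hin⟩
end

section
/- Let ε ∈ (0, 10⁻³]. Define L₁ = (1+ε/9)Δ, T₁ = Δ, R₁ = εΔ/2 and, for i ≥ 1, L_{i+1} = (1−e^{−2})² L_i − L_i^{2/3}, T_{i+1} = (1−e^{−2})² T_i + T_i^{2/3}, R_{i+1} = (1−e^{−2}) R_i + R_i^{2/3}, and let i* be the smallest positive integer i such that R_{i+1} < (ε²/18)²·Δ/128. Then for every 1 ≤ i ≤ i*+1 one has L_i/T_i ≤ 1 + ε/9, and for every δ > 0 there exists Δ₀ (depending only on ε and δ) such that for all Δ ≥ Δ₀ and all 1 ≤ i ≤ i*+1, L_i/T_i ≥ 1 + ε/9 − δ. -/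
/-!
Put `a = (1 - e⁻²)²` and `ρ = 1 + ε / 9`. The gap `D i = ρ T i - L i` satisfies
`D (i + 1) = a D i + ρ (T i)^(2/3) + (L i)^(2/3)`, so it stays nonnegative; and while
`(T i)^(2/3) ≤ η T i`, the ratio `D i / T i` grows by at most `2ρη / a` per step, because
`T (i + 1) ≥ a T i`. The sequence `R` contracts by a factor `9 / 10` until it is `O(1)`, so `i*` is
bounded by some `N` depending only on `ε`. On the first `N + 1` steps `T i ≥ a^N Δ`, so for large
`Δ` the parameter `η` can be taken as small as needed.
-/

open Real

lemma two_fifteenths_lt_exp_neg_two : (2 : ℝ) / 15 < exp (-2) := by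
  have h : exp 2 < 15 / 2 := by
    have : exp 2 = exp 1 * exp 1 := by rw [← exp_add]; norm_num
    nlinarith [exp_one_lt_d9, exp_pos 1]
  rw [exp_neg, lt_inv_comm₀ (by norm_num) (exp_pos 2)]
  linarith

lemma rpow_two_thirds_le_mul_self {η x : ℝ} (hη : 0 < η) (hx : η⁻¹ ^ 3 ≤ x) :
    x ^ ((2 : ℝ) / 3) ≤ η * x := by
  have hx0 : 0 < x := lt_of_lt_of_le (by positivity) hx
  set y := x ^ ((1 : ℝ) / 3)
  have hy : η⁻¹ ≤ y :=
    calc η⁻¹ = (η⁻¹ ^ 3) ^ ((1 : ℝ) / 3) := by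
          rw [← rpow_natCast, ← rpow_mul (by positivity)]; norm_num
      _ ≤ y := rpow_le_rpow (by positivity) hx (by norm_num)
  have hηy : 1 ≤ η * y := by rwa [inv_le_iff_one_le_mul₀' hη] at hy
  have hy2 : x ^ ((2 : ℝ) / 3) = y ^ 2 := by
    rw [← rpow_natCast, ← rpow_mul hx0.le]; norm_num
  have hy3 : x = y ^ 3 := by
    rw [← rpow_natCast, ← rpow_mul hx0.le]; norm_num
  rw [hy2, hy3]
  nlinarith [pow_nonneg (rpow_nonneg hx0.le ((1 : ℝ) / 3)) 2]

lemma mul_rpow_two_thirds_le {ρ x : ℝ} (hρ : 1 ≤ ρ) (hx : 0 ≤ x) :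
    (ρ * x) ^ ((2 : ℝ) / 3) ≤ ρ * x ^ ((2 : ℝ) / 3) := by
  rw [mul_rpow (by linarith) hx]
  gcongr
  exact rpow_le_self_of_one_le hρ (by norm_num)

lemma le_max_pow_mul_of_le_mul_max {x : ℕ → ℝ} {b K : ℝ} (hb0 : 0 ≤ b) (hb1 : b ≤ 1)
    (hK : 0 ≤ K) (hx : ∀ i, 1 ≤ i → x (i + 1) ≤ b * max (x i) K) :
    ∀ i, 1 ≤ i → x i ≤ max (b ^ (i - 1) * x 1) K := by
  refine Nat.le_induction (by simp) fun i hi ih => ?_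
  calc x (i + 1) ≤ b * max (x i) K := hx i hi
    _ ≤ b * max (b ^ (i - 1) * x 1) K :=
        mul_le_mul_of_nonneg_left (max_le ih (le_max_right _ _)) hb0
    _ = max (b ^ (i + 1 - 1) * x 1) (b * K) := by
        rw [mul_max_of_nonneg _ _ hb0, show i + 1 - 1 = i - 1 + 1 by omega, pow_succ]; ring_nf
    _ ≤ max (b ^ (i + 1 - 1) * x 1) K := by gcongr; exact mul_le_of_le_one_left hK hb1

lemma pow_mul_le_of_rec_add_rpow {a : ℝ} {x : ℕ → ℝ} (ha : 0 ≤ a) (hx1 : 0 ≤ x 1)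
    (hx : ∀ i, 1 ≤ i → x (i + 1) = a * x i + x i ^ ((2 : ℝ) / 3)) :
    ∀ i, 1 ≤ i → a ^ (i - 1) * x 1 ≤ x i := by
  refine Nat.le_induction (by simp) fun i hi ih => ?_
  have hxi : 0 ≤ x i := le_trans (by positivity) ih
  calc a ^ (i + 1 - 1) * x 1 = a * (a ^ (i - 1) * x 1) := by
        rw [show i + 1 - 1 = i - 1 + 1 by omega, pow_succ]; ring
    _ ≤ a * x i := by gcongr
    _ ≤ x (i + 1) := by rw [hx i hi]; linarith [rpow_nonneg hxi ((2 : ℝ) / 3)]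

-- `27000 = 30 ^ 3` and `13 / 15 + 1 / 30 = 9 / 10`.
lemma mul_add_rpow_two_thirds_le {c x : ℝ} (hc : c ≤ 13 / 15) (hx : 0 ≤ x) :
    c * x + x ^ ((2 : ℝ) / 3) ≤ 9 / 10 * max x 27000 := by
  have hm : x ^ ((2 : ℝ) / 3) ≤ (max x 27000) ^ ((2 : ℝ) / 3) :=
    rpow_le_rpow hx (le_max_left _ _) (by norm_num)
  have hm' : (max x 27000) ^ ((2 : ℝ) / 3) ≤ 1 / 30 * max x 27000 :=
    rpow_two_thirds_le_mul_self (by norm_num) (by norm_num)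
  have hcx : c * x ≤ 13 / 15 * max x 27000 :=
    mul_le_mul hc (le_max_left _ _) hx (by norm_num)
  linarith

lemma exists_lt_mul_of_rec_add_rpow {c β θ : ℝ} (hc0 : 0 ≤ c) (hc : c ≤ 13 / 15) (hβ : 0 ≤ β)
    (hθ : 0 < θ) :
    ∃ N : ℕ, 1 ≤ N ∧ ∃ Δ₀ : ℝ, ∀ Δ, Δ₀ ≤ Δ → ∀ R : ℕ → ℝ, R 1 = β * Δ →
      (∀ i, 1 ≤ i → R (i + 1) = c * R i + R i ^ ((2 : ℝ) / 3)) → R (N + 1) < θ * Δ := by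
  obtain ⟨N, hN⟩ := exists_pow_lt_of_lt_one (show 0 < θ / (β + 1) by positivity)
    (show (9 / 10 : ℝ) < 1 by norm_num)
  refine ⟨N + 1, by omega, 27000 / θ + 1, fun Δ hΔ R hR1 hR => ?_⟩
  have hΔ0 : 0 < Δ := lt_of_lt_of_le (by positivity) hΔ
  have hK : 27000 < θ * Δ := by rw [div_add_one hθ.ne', div_le_iff₀ hθ] at hΔ; linarith
  have hgeom : (9 / 10 : ℝ) ^ (N + 1) * β < θ := by
    rw [lt_div_iff₀ (by positivity)] at hN
    calc (9 / 10 : ℝ) ^ (N + 1) * β ≤ (9 / 10) ^ N * β :=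
          mul_le_mul_of_nonneg_right (pow_le_pow_of_le_one (by norm_num) (by norm_num) N.le_succ) hβ
      _ ≤ (9 / 10) ^ N * (β + 1) := by gcongr; linarith
      _ < θ := hN
  have hR1nonneg : 0 ≤ R 1 := by rw [hR1]; positivity
  have hRnonneg (i : ℕ) (hi : 1 ≤ i) : 0 ≤ R i :=
    le_trans (by positivity) (pow_mul_le_of_rec_add_rpow hc0 hR1nonneg hR i hi)
  have hbound := le_max_pow_mul_of_le_mul_max (by norm_num) (by norm_num) (by norm_num)
    (fun i hi => (hR i hi).symm ▸ mul_add_rpow_two_thirds_le hc (hRnonneg i hi)) (N + 2) (by omega)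
  refine lt_of_le_of_lt hbound (max_lt ?_ hK)
  rw [hR1, show N + 2 - 1 = N + 1 by omega, ← mul_assoc]
  exact mul_lt_mul_of_pos_right hgeom hΔ0

lemma mul_sub_bounds_of_rec {a ρ η : ℝ} {n : ℕ} {L T : ℕ → ℝ} (ha : 0 < a) (hρ : 1 ≤ ρ) (hη : 0 < η)
    (hn : 2 * ρ * η * n ≤ a) (hL1 : L 1 = ρ * T 1)
    (hL : ∀ i, 1 ≤ i → L (i + 1) = a * L i - L i ^ ((2 : ℝ) / 3))
    (hT : ∀ i, 1 ≤ i → T (i + 1) = a * T i + T i ^ ((2 : ℝ) / 3))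
    (hTlarge : ∀ i, 1 ≤ i → i < n → η⁻¹ ^ 3 ≤ T i) :
    ∀ i, 1 ≤ i → i ≤ n →
      0 ≤ ρ * T i - L i ∧ ρ * T i - L i ≤ ((i : ℝ) - 1) * (2 * ρ * η / a) * T i := by
  set κ := 2 * ρ * η / a
  refine Nat.le_induction (fun _ => by simp [hL1]) fun i hi ih hin => ?_
  obtain ⟨hgap0, hgap⟩ := ih (by omega)
  have hTi : η⁻¹ ^ 3 ≤ T i := hTlarge i hi (by omega)
  have hTi0 : 0 < T i := lt_of_lt_of_le (by positivity) hTi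
  have hκ : ((i : ℝ) - 1) * κ ≤ 1 := by
    have hin' : (i : ℝ) ≤ n := by exact_mod_cast (show i ≤ n by omega)
    calc ((i : ℝ) - 1) * κ ≤ n * κ := by gcongr; linarith
      _ = 2 * ρ * η * n / a := by ring
      _ ≤ 1 := by rwa [div_le_one ha]
  have hLi0 : 0 ≤ L i := by nlinarith
  have hLpow : L i ^ ((2 : ℝ) / 3) ≤ ρ * T i ^ ((2 : ℝ) / 3) :=
    (rpow_le_rpow hLi0 (by linarith) (by norm_num)).trans (mul_rpow_two_thirds_le hρ hTi0.le)
  have hTpow : T i ^ ((2 : ℝ) / 3) ≤ η * T i := rpow_two_thirds_le_mul_self hη hTi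
  have hgap_succ : ρ * T (i + 1) - L (i + 1) =
      a * (ρ * T i - L i) + ρ * T i ^ ((2 : ℝ) / 3) + L i ^ ((2 : ℝ) / 3) := by
    rw [hL i hi, hT i hi]; ring
  have hTsucc : a * T i ≤ T (i + 1) := by
    rw [hT i hi]; linarith [rpow_nonneg hTi0.le ((2 : ℝ) / 3)]
  rw [hgap_succ]
  push_cast
  constructor
  · have := rpow_nonneg hLi0 ((2 : ℝ) / 3)
    have := rpow_nonneg hTi0.le ((2 : ℝ) / 3)
    positivity
  calc a * (ρ * T i - L i) + ρ * T i ^ ((2 : ℝ) / 3) + L i ^ ((2 : ℝ) / 3)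
      ≤ a * (((i : ℝ) - 1) * κ * T i) + 2 * ρ * (η * T i) := by
        have := mul_le_mul_of_nonneg_left hTpow (by linarith : (0 : ℝ) ≤ ρ)
        nlinarith
    _ = i * κ * (a * T i) := by simp only [κ]; field_simp; ring
    _ ≤ i * κ * T (i + 1) := by gcongr
    _ = ((i : ℝ) + 1 - 1) * κ * T (i + 1) := by ring

theorem ratio_bounds (ε δ : ℝ) (hε : 0 < ε) (hδ : 0 < δ) :
    ∃ Δ₀ : ℝ, ∀ Δ : ℝ, Δ₀ ≤ Δ →
      ∀ (L T R : ℕ → ℝ) (istar : ℕ),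
        L 1 = (1 + ε / 9) * Δ →
        T 1 = Δ →
        R 1 = ε * Δ / 2 →
        (∀ i : ℕ, 1 ≤ i →
          L (i + 1) = (1 - Real.exp (-2)) ^ 2 * L i - L i ^ ((2 : ℝ) / 3)) →
        (∀ i : ℕ, 1 ≤ i →
          T (i + 1) = (1 - Real.exp (-2)) ^ 2 * T i + T i ^ ((2 : ℝ) / 3)) →
        (∀ i : ℕ, 1 ≤ i →
          R (i + 1) = (1 - Real.exp (-2)) * R i + R i ^ ((2 : ℝ) / 3)) →
        1 ≤ istar →
        R (istar + 1) < (ε ^ 2 / 18) ^ 2 * Δ / 128 →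
        (∀ j : ℕ, 1 ≤ j → R (j + 1) < (ε ^ 2 / 18) ^ 2 * Δ / 128 → istar ≤ j) →
        ∀ i : ℕ, 1 ≤ i → i ≤ istar + 1 →
          L i / T i ≤ 1 + ε / 9 ∧ 1 + ε / 9 - δ ≤ L i / T i := by
  set c := 1 - exp (-2) with hc
  have hc0 : 0 < c := by rw [hc, sub_pos, exp_lt_one_iff]; norm_num
  have hc1 : c ≤ 13 / 15 := by linarith [two_fifteenths_lt_exp_neg_two]
  set a := c ^ 2
  have ha0 : 0 < a := by positivity
  have ha1 : a ≤ 1 := pow_le_one₀ hc0.le (by linarith)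
  set ρ := 1 + ε / 9
  have hρ : 1 ≤ ρ := le_add_of_nonneg_right (by positivity)
  obtain ⟨N, hN1, Δ₁, hR⟩ := exists_lt_mul_of_rec_add_rpow hc0.le hc1 (by positivity : 0 ≤ ε / 2)
    (by positivity : 0 < (ε ^ 2 / 18) ^ 2 / 128)
  set δ' := min δ 1
  have hδ' : 0 < δ' := by positivity
  set η := a * δ' / (2 * ρ * (N + 1))
  have hη : 0 < η := by positivity
  refine ⟨max Δ₁ (η⁻¹ ^ 3 / a ^ N),
    fun Δ hΔ L T R istar hL1 hT1 hR1 hL hT hRrec _ _ hmin i hi hi' => ?_⟩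
  have hΔlarge : η⁻¹ ^ 3 ≤ a ^ N * Δ := by
    rw [← div_le_iff₀' (by positivity)]; exact le_of_max_le_right hΔ
  have hΔ0 : 0 < Δ := pos_of_mul_pos_right (lt_of_lt_of_le (by positivity) hΔlarge) (by positivity)
  have histar : istar ≤ N := hmin N hN1 <| by
    convert hR Δ (le_of_max_le_left hΔ) R (by rw [hR1]; ring) hRrec using 1; ring
  have hTgeom (j : ℕ) (hj : 1 ≤ j) : a ^ (j - 1) * Δ ≤ T j :=
    hT1 ▸ pow_mul_le_of_rec_add_rpow ha0.le (hT1 ▸ hΔ0.le) hT j hj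
  have hTlarge (j : ℕ) (hj : 1 ≤ j) (hjN : j < N + 1) : η⁻¹ ^ 3 ≤ T j :=
    calc η⁻¹ ^ 3 ≤ a ^ N * Δ := hΔlarge
      _ ≤ a ^ (j - 1) * Δ :=
          mul_le_mul_of_nonneg_right (pow_le_pow_of_le_one ha0.le ha1 (by omega)) hΔ0.le
      _ ≤ T j := hTgeom j hj
  have hn : 2 * ρ * η * ((N + 1 : ℕ) : ℝ) ≤ a := by
    calc 2 * ρ * η * ((N + 1 : ℕ) : ℝ) = a * δ' := by simp only [η]; push_cast; field_simp
      _ ≤ a := mul_le_of_le_one_right ha0.le (min_le_right _ _)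
  obtain ⟨hgap0, hgap⟩ := mul_sub_bounds_of_rec ha0 hρ hη hn (by rw [hL1, hT1]) hL hT hTlarge i hi
    (by omega)
  have hTi : 0 < T i := lt_of_lt_of_le (by positivity) (hTgeom i hi)
  have hκ : ((i : ℝ) - 1) * (2 * ρ * η / a) ≤ δ := by
    have hiN : (i : ℝ) - 1 ≤ N + 1 := by
      have : (i : ℝ) ≤ istar + 1 := by exact_mod_cast hi'
      have : (istar : ℝ) ≤ N := by exact_mod_cast histar
      linarith
    calc ((i : ℝ) - 1) * (2 * ρ * η / a) ≤ (N + 1) * (2 * ρ * η / a) := by gcongr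
      _ = δ' := by simp only [η]; field_simp
      _ ≤ δ := min_le_left _ _
  constructor
  · rw [div_le_iff₀ hTi]; linarith
  · rw [le_div_iff₀ hTi]; nlinarith

theorem statement9_general (ε : ℝ) (hε0 : 0 < ε) :
    (∃ Δ₀ : ℝ, ∀ Δ : ℝ, Δ₀ ≤ Δ →
      ∀ (L T R : ℕ → ℝ) (istar : ℕ),
        L 1 = (1 + ε / 9) * Δ →
        T 1 = Δ →
        R 1 = ε * Δ / 2 →
        (∀ i : ℕ, 1 ≤ i →
          L (i + 1) = (1 - Real.exp (-2)) ^ 2 * L i - L i ^ ((2 : ℝ) / 3)) →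
        (∀ i : ℕ, 1 ≤ i →
          T (i + 1) = (1 - Real.exp (-2)) ^ 2 * T i + T i ^ ((2 : ℝ) / 3)) →
        (∀ i : ℕ, 1 ≤ i →
          R (i + 1) = (1 - Real.exp (-2)) * R i + R i ^ ((2 : ℝ) / 3)) →
        1 ≤ istar →
        R (istar + 1) < (ε ^ 2 / 18) ^ 2 * Δ / 128 →
        (∀ j : ℕ, 1 ≤ j → R (j + 1) < (ε ^ 2 / 18) ^ 2 * Δ / 128 → istar ≤ j) →
        ∀ i : ℕ, 1 ≤ i → i ≤ istar + 1 →
          L i / T i ≤ 1 + ε / 9) ∧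
    (∀ δ : ℝ, 0 < δ →
      ∃ Δ₀ : ℝ, ∀ Δ : ℝ, Δ₀ ≤ Δ →
        ∀ (L T R : ℕ → ℝ) (istar : ℕ),
          L 1 = (1 + ε / 9) * Δ →
          T 1 = Δ →
          R 1 = ε * Δ / 2 →
          (∀ i : ℕ, 1 ≤ i →
            L (i + 1) = (1 - Real.exp (-2)) ^ 2 * L i - L i ^ ((2 : ℝ) / 3)) →
          (∀ i : ℕ, 1 ≤ i →
            T (i + 1) = (1 - Real.exp (-2)) ^ 2 * T i + T i ^ ((2 : ℝ) / 3)) →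
          (∀ i : ℕ, 1 ≤ i →
            R (i + 1) = (1 - Real.exp (-2)) * R i + R i ^ ((2 : ℝ) / 3)) →
          1 ≤ istar →
          R (istar + 1) < (ε ^ 2 / 18) ^ 2 * Δ / 128 →
          (∀ j : ℕ, 1 ≤ j → R (j + 1) < (ε ^ 2 / 18) ^ 2 * Δ / 128 → istar ≤ j) →
          ∀ i : ℕ, 1 ≤ i → i ≤ istar + 1 →
            1 + ε / 9 - δ ≤ L i / T i) := by
  refine ⟨?_, fun δ hδ => ?_⟩
  · obtain ⟨Δ₀, h⟩ := ratio_bounds ε 1 hε0 one_pos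
    exact ⟨Δ₀, fun Δ hΔ L T R istar h1 h2 h3 h4 h5 h6 h7 h8 h9 i hi hi' =>
      (h Δ hΔ L T R istar h1 h2 h3 h4 h5 h6 h7 h8 h9 i hi hi').1⟩
  · obtain ⟨Δ₀, h⟩ := ratio_bounds ε δ hε0 hδ
    exact ⟨Δ₀, fun Δ hΔ L T R istar h1 h2 h3 h4 h5 h6 h7 h8 h9 i hi hi' =>
      (h Δ hΔ L T R istar h1 h2 h3 h4 h5 h6 h7 h8 h9 i hi hi').2⟩

/-- Let `ε ∈ (0, 10⁻³]`. For the sequences defined by `L 1 = (1+ε/9)Δ`, `T 1 = Δ`,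
`R 1 = εΔ/2` and, for `i ≥ 1`, `L (i+1) = (1−e⁻²)² L i − (L i)^(2/3)`,
`T (i+1) = (1−e⁻²)² T i + (T i)^(2/3)`, `R (i+1) = (1−e⁻²) R i + (R i)^(2/3)`, with `i*`
the smallest positive integer `i` such that `R (i+1) < (ε²/18)²·Δ/128`:
for all large `Δ` and all `1 ≤ i ≤ i*+1` one has `L i / T i ≤ 1 + ε/9`, and for every
`δ > 0` there is `Δ₀` (depending only on `ε` and `δ`) such that for all `Δ ≥ Δ₀` and
all `1 ≤ i ≤ i*+1`, `L i / T i ≥ 1 + ε/9 − δ`. -/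
theorem statement9 (ε : ℝ) (hε0 : 0 < ε) (hε1 : ε ≤ 1 / 1000) :
    (∃ Δ₀ : ℝ, ∀ Δ : ℝ, Δ₀ ≤ Δ →
      ∀ (L T R : ℕ → ℝ) (istar : ℕ),
        L 1 = (1 + ε / 9) * Δ →
        T 1 = Δ →
        R 1 = ε * Δ / 2 →
        (∀ i : ℕ, 1 ≤ i →
          L (i + 1) = (1 - Real.exp (-2)) ^ 2 * L i - L i ^ ((2 : ℝ) / 3)) →
        (∀ i : ℕ, 1 ≤ i →
          T (i + 1) = (1 - Real.exp (-2)) ^ 2 * T i + T i ^ ((2 : ℝ) / 3)) →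
        (∀ i : ℕ, 1 ≤ i →
          R (i + 1) = (1 - Real.exp (-2)) * R i + R i ^ ((2 : ℝ) / 3)) →
        1 ≤ istar →
        R (istar + 1) < (ε ^ 2 / 18) ^ 2 * Δ / 128 →
        (∀ j : ℕ, 1 ≤ j → R (j + 1) < (ε ^ 2 / 18) ^ 2 * Δ / 128 → istar ≤ j) →
        ∀ i : ℕ, 1 ≤ i → i ≤ istar + 1 →
          L i / T i ≤ 1 + ε / 9) ∧
    (∀ δ : ℝ, 0 < δ →
      ∃ Δ₀ : ℝ, ∀ Δ : ℝ, Δ₀ ≤ Δ →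
        ∀ (L T R : ℕ → ℝ) (istar : ℕ),
          L 1 = (1 + ε / 9) * Δ →
          T 1 = Δ →
          R 1 = ε * Δ / 2 →
          (∀ i : ℕ, 1 ≤ i →
            L (i + 1) = (1 - Real.exp (-2)) ^ 2 * L i - L i ^ ((2 : ℝ) / 3)) →
          (∀ i : ℕ, 1 ≤ i →
            T (i + 1) = (1 - Real.exp (-2)) ^ 2 * T i + T i ^ ((2 : ℝ) / 3)) →
          (∀ i : ℕ, 1 ≤ i →
            R (i + 1) = (1 - Real.exp (-2)) * R i + R i ^ ((2 : ℝ) / 3)) →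
          1 ≤ istar →
          R (istar + 1) < (ε ^ 2 / 18) ^ 2 * Δ / 128 →
          (∀ j : ℕ, 1 ≤ j → R (j + 1) < (ε ^ 2 / 18) ^ 2 * Δ / 128 → istar ≤ j) →
          ∀ i : ℕ, 1 ≤ i → i ≤ istar + 1 →
            1 + ε / 9 - δ ≤ L i / T i) :=
  statement9_general ε hε0
end

section
/- Let ε ∈ (0, 10⁻³]. Define R₁ = εΔ/2 and R_{i+1} = (1−e^{−2}) R_i + R_i^{2/3} for i ≥ 1, and let i* be the smallest positive integer i such that R_{i+1} < (ε²/18)²·Δ/128. Then there exists an absolute constant c > 0 such that, for all Δ sufficiently large in terms of ε, i* ≤ c·log₂(1/ε); in particular i* depends only on ε and not on Δ. -/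
/-!
Above the level `(2 e²)³` the correction `x^{2/3}` is at most `e⁻² x / 2`, so each step of the
recursion multiplies `R i` by at most `q = 1 - e⁻²/2 ≤ 15/16`. For `Δ` large the stopping threshold
`T = ε⁴Δ/41472` lies above that level, so up to `i*` the sequence decays at least geometrically;
since `T / R 1 = ε³/20736 ≥ ε⁵`, this can last at most `80 log(1/ε) + 1` steps.
-/

open Real

lemma rpow_two_div_three_le_mul {c x : ℝ} (hc : 0 < c) (hx : c⁻¹ ^ 3 ≤ x) :
    x ^ ((2 : ℝ) / 3) ≤ c * x := by
  have hx0 : 0 < x := lt_of_lt_of_le (by positivity) hx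
  have hcube : c⁻¹ ≤ x ^ ((3 : ℕ)⁻¹ : ℝ) := by
    calc c⁻¹ = (c⁻¹ ^ 3) ^ ((3 : ℕ)⁻¹ : ℝ) :=
          (pow_rpow_inv_natCast (by positivity) three_ne_zero).symm
      _ ≤ x ^ ((3 : ℕ)⁻¹ : ℝ) := rpow_le_rpow (by positivity) hx (by positivity)
  have hsplit : x = x ^ ((2 : ℝ) / 3) * x ^ ((3 : ℕ)⁻¹ : ℝ) := by
    rw [← rpow_add hx0]; norm_num
  calc x ^ ((2 : ℝ) / 3) = c * (x ^ ((2 : ℝ) / 3) * c⁻¹) := by field_simp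
    _ ≤ c * (x ^ ((2 : ℝ) / 3) * x ^ ((3 : ℕ)⁻¹ : ℝ)) := by gcongr
    _ = c * x := by rw [← hsplit]

lemma le_pow_mul_of_first_passage {R : ℕ → ℝ} {q T : ℝ} {n : ℕ} (hq : 0 ≤ q) (hn : 1 ≤ n)
    (hstep : ∀ i, 1 ≤ i → T ≤ R i → R (i + 1) ≤ q * R i) (hR1 : T ≤ R 1)
    (hmin : ∀ j, 1 ≤ j → R (j + 1) < T → n ≤ j) :
    T ≤ q ^ (n - 1) * R 1 := by
  have above : ∀ k, k + 1 ≤ n → T ≤ R (k + 1) := by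
    rintro (_ | k) hk
    · exact hR1
    · by_contra! h
      exact absurd (hmin (k + 1) (by omega) h) (by omega)
  have decay : ∀ k, k + 1 ≤ n → R (k + 1) ≤ q ^ k * R 1 := by
    intro k hk
    induction k with
    | zero => simp
    | succ k ih =>
      calc R (k + 1 + 1) ≤ q * R (k + 1) := hstep _ (by omega) (above k (by omega))
        _ ≤ q * (q ^ k * R 1) := by gcongr; exact ih (by omega)
        _ = q ^ (k + 1) * R 1 := by ring
  obtain ⟨k, rfl⟩ : ∃ k, n = k + 1 := ⟨n - 1, by omega⟩
  exact (above k le_rfl).trans (decay k le_rfl)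

lemma mul_natCast_le_mul_log_one_div_of_pow_le_pow {ε q δ : ℝ} {m k : ℕ} (hε : 0 < ε) (hq : 0 < q)
    (hqδ : q ≤ 1 - δ) (h : ε ^ m ≤ q ^ k) : δ * k ≤ m * log (1 / ε) := by
  have hlog : m * log ε ≤ k * log q := by
    simpa only [log_pow] using log_le_log (by positivity) h
  have hq1 : k * log q ≤ k * (q - 1) := by gcongr; exact log_le_sub_one_of_pos hq
  rw [one_div, log_inv]
  nlinarith

lemma one_sixteenth_le_exp_neg_two_div_two : (1 : ℝ) / 16 ≤ exp (-2) / 2 := by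
  have h2 : exp 2 < 8 := by
    have : exp 2 = exp 1 ^ 2 := by rw [← exp_nat_mul]; norm_num
    rw [this]
    nlinarith [exp_one_lt_d9, exp_pos 1]
  rw [exp_neg, inv_eq_one_div, div_div, le_div_iff₀ (by positivity)]
  linarith

lemma log_le_logb_two {x : ℝ} (hx : 1 ≤ x) : log x ≤ logb 2 x := by
  rw [logb, le_div_iff₀ (log_pos one_lt_two)]
  nlinarith [log_nonneg hx, log_two_lt_d9]

/-- Let `ε ∈ (0, 10⁻³]`, define `R 1 = εΔ/2` and `R (i+1) = (1−e⁻²) R i + (R i)^(2/3)`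
for `i ≥ 1`, and let `i*` be the smallest positive integer `i` such that
`R (i+1) < (ε²/18)²·Δ/128`. Then there is an absolute constant `c > 0` such that, for
all `Δ` sufficiently large in terms of `ε`, `i* ≤ c·log₂(1/ε)`; in particular `i*`
depends only on `ε` and not on `Δ`. -/
theorem statement10 :
    ∃ c : ℝ, 0 < c ∧
      ∀ ε : ℝ, 0 < ε → ε ≤ 1 / 1000 →
        ∃ Δ₀ : ℝ, ∀ Δ : ℝ, Δ₀ ≤ Δ →
          ∀ (R : ℕ → ℝ) (istar : ℕ),
            R 1 = ε * Δ / 2 →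
            (∀ i : ℕ, 1 ≤ i →
              R (i + 1) = (1 - Real.exp (-2)) * R i + R i ^ ((2 : ℝ) / 3)) →
            1 ≤ istar →
            R (istar + 1) < (ε ^ 2 / 18) ^ 2 * Δ / 128 →
            (∀ j : ℕ, 1 ≤ j → R (j + 1) < (ε ^ 2 / 18) ^ 2 * Δ / 128 → istar ≤ j) →
            (istar : ℝ) ≤ c * Real.logb 2 (1 / ε) := by
  refine ⟨81, by norm_num, fun ε hε hε' => ⟨41472 * (exp (-2) / 2)⁻¹ ^ 3 / ε ^ 4, ?_⟩⟩
  intro Δ hΔ R istar hR1 hrec histar _ hmin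
  have hexp_lb := one_sixteenth_le_exp_neg_two_div_two
  have hexp : exp (-2) < 1 := exp_lt_one_iff.mpr (by norm_num)
  have hT : (ε ^ 2 / 18) ^ 2 * Δ / 128 = ε ^ 3 / 20736 * R 1 := by rw [hR1]; ring
  have hlevel : (exp (-2) / 2)⁻¹ ^ 3 ≤ (ε ^ 2 / 18) ^ 2 * Δ / 128 := by
    rw [div_le_iff₀ (by positivity)] at hΔ
    nlinarith
  have hR1pos : 0 < R 1 := by
    have : 0 < ε ^ 3 / 20736 * R 1 := hT ▸ lt_of_lt_of_le (by positivity) hlevel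
    exact pos_of_mul_pos_right this (by positivity)
  have hε3 : ε ^ 3 / 20736 ≤ 1 :=
    div_le_one_of_le₀ ((pow_le_one₀ hε.le (by linarith)).trans (by norm_num)) (by norm_num)
  have hstep : ∀ i, 1 ≤ i → (ε ^ 2 / 18) ^ 2 * Δ / 128 ≤ R i →
      R (i + 1) ≤ (1 - exp (-2) / 2) * R i := fun i hi hRi => by
    rw [hrec i hi]
    linarith [rpow_two_div_three_le_mul (by positivity) (hlevel.trans hRi)]
  have hpass := le_pow_mul_of_first_passage (by linarith) histar hstep
    (by rw [hT]; exact mul_le_of_le_one_left hR1pos.le hε3) hmin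
  rw [hT, mul_le_mul_iff_left₀ hR1pos] at hpass
  have hε5 : ε ^ 5 ≤ ε ^ 3 / 20736 := by
    rw [le_div_iff₀ (by norm_num), pow_succ ε 4, pow_succ ε 3]
    nlinarith [pow_pos hε 3]
  have hcount := mul_natCast_le_mul_log_one_div_of_pow_le_pow (δ := 1 / 16) hε (by linarith)
    (by linarith) (hε5.trans hpass)
  have hL : 1 ≤ log (1 / ε) := by
    rw [le_log_iff_exp_le (by positivity), le_div_iff₀ hε]
    nlinarith [exp_one_lt_d9]
  have hlogb := log_le_logb_two (x := 1 / ε) (by rw [le_div_iff₀ hε]; linarith)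
  rw [Nat.cast_sub histar] at hcount
  push_cast at hcount
  nlinarith
end
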